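/- arXiv:math/0102173 — 3 statements merged into one kernel-verified Lean document; each statement's English description precedes it below -/
import Mathlib

section
/- Let U = Σ_{n∈ℤ} U_n t^n be a square matrix over Γ with U ≡ 1 (mod π). Then there exists a unique pair (P, N) of matrices over Γ of the form P = 1 + Σ_{n=1}^∞ A_n t^n and N = C + Σ_{n=1}^∞ B_n t^{−n}, with C a matrix over O, such that U = PN. Moreover, for ε > 0: if |U_n| < ε for all n > a, then |A_n| < ε for all n > a; and if |U_n| < ε for all n < −b, then |B_n| < ε for all n < −b. -/
open scoped Classical

/-- The base setting: `O` is a complete discrete valuation ring which is a finite totally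
ramified extension of the Witt vectors of an algebraically closed field `k` of characteristic
`p` (encoded via: complete DVR, absolute value `abv` with `abv p = 1/p`, value group
`p^(ℤ/m)`, algebraically closed residue field), equipped with a Frobenius lift `σO`;
`Γ` is the ring of series `∑ cᵢ tⁱ` (`i ∈ ℤ`, `cᵢ ∈ O`) such that for each `ε < 1` the set
`{i | |cᵢ| ≥ ε}` is bounded below, encoded via its coefficient functionals `coeff`. -/
structure GammaSetting (p : ℕ) [Fact p.Prime] where
  O : Type
  [commO : CommRing O]
  [domO : IsDomain O]
  [dvrO : IsDiscreteValuationRing O]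
  abv : O → ℝ
  abv_nonneg : ∀ x, 0 ≤ abv x
  abv_eq_zero : ∀ x, abv x = 0 ↔ x = 0
  abv_mul : ∀ x y, abv (x * y) = abv x * abv y
  abv_add_le : ∀ x y, abv (x + y) ≤ max (abv x) (abv y)
  abv_le_one : ∀ x, abv x ≤ 1
  abv_p : abv (p : O) = (p : ℝ)⁻¹
  isUnit_iff_abv : ∀ x : O, IsUnit x ↔ abv x = 1
  m : ℕ
  m_pos : 0 < m
  abv_discrete : ∀ x : O, x ≠ 0 → ∃ n : ℕ, abv x = (p : ℝ) ^ (-(n : ℝ) / (m : ℝ))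
  complete : ∀ f : ℕ → O,
    (∀ ε : ℝ, 0 < ε → ∃ N, ∀ a ≥ N, ∀ b ≥ N, abv (f a - f b) < ε) →
    ∃ x : O, ∀ ε : ℝ, 0 < ε → ∃ N, ∀ a ≥ N, abv (f a - x) < ε
  residue_algClosed : ∀ f : Polynomial O, f.Monic → 0 < f.natDegree →
    ∃ x : O, abv (Polynomial.eval x f) < 1
  σO : O ≃+* O
  abv_σO : ∀ x, abv (σO x) = abv x
  σO_frob : ∀ x : O, abv (σO x - x ^ p) < 1
  Γ : Type
  [commΓ : CommRing Γ]
  coeff : Γ → ℤ → O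
  coeff_injective : Function.Injective coeff
  coeff_add : ∀ x y i, coeff (x + y) i = coeff x i + coeff y i
  coeff_bddBelow : ∀ (x : Γ) (ε : ℝ), 0 < ε → ε < 1 →
    ∃ N : ℤ, ∀ i < N, abv (coeff x i) < ε
  coeff_surjective : ∀ f : ℤ → O,
    (∀ ε : ℝ, 0 < ε → ε < 1 → ∃ N : ℤ, ∀ i < N, abv (f i) < ε) → ∃ x, coeff x = f
  coeff_one : ∀ i, coeff 1 i = if i = 0 then 1 else 0
  t : Γ
  coeff_t : ∀ i, coeff t i = if i = 1 then 1 else 0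
  const : O →+* Γ
  coeff_const : ∀ a i, coeff (const a) i = if i = 0 then a else 0
  coeff_mul : ∀ (x y : Γ) (n : ℤ) (ε : ℝ), 0 < ε →
    ∃ S : Finset ℤ, ∀ T : Finset ℤ, S ⊆ T →
      abv (coeff (x * y) n - ∑ i ∈ T, coeff x i * coeff y (n - i)) < ε
  frobt : Γ →+* Γ
  coeff_frobt : ∀ x n, coeff (frobt x) n =
    if (p : ℤ) ∣ n then σO (coeff x (n / (p : ℤ))) else 0

attribute [instance] GammaSetting.commO GammaSetting.domO GammaSetting.dvrO GammaSetting.commΓ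

namespace GammaSetting

variable {p : ℕ} [Fact p.Prime] (S : GammaSetting p)

/-- The set of indices where the coefficient has absolute value at least `p^(-n)`. -/
def vSet (x : S.Γ) (n : ℚ) : Set ℤ :=
  {j : ℤ | (p : ℝ) ^ (-(n : ℝ)) ≤ S.abv (S.coeff x j)}

/-- The partial valuation `v_{t,n}` : the smallest `j` with `|coeff x j| ≥ p^(-n)`,
or `∞` if there is none. -/
noncomputable def v (x : S.Γ) (n : ℚ) : WithTop ℤ :=
  if h : (S.vSet x n).Nonempty then ((sInf (S.vSet x n) : ℤ) : WithTop ℤ) else ⊤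

/-- The overconvergent subring `Γ_con` (with respect to `t`), as a set. -/
def conSet : Set S.Γ :=
  {x | ∃ c d : ℝ, 0 < c ∧ 0 < d ∧ ∀ n : ℚ, 0 ≤ n → ∀ j ∈ S.vSet x n,
    -(c * (n : ℝ) + d) ≤ (j : ℝ)}

/-- The subring `Ω = O[[t]]` of `Γ`, as a set. -/
def omegaSet : Set S.Γ := {x | ∀ i : ℤ, i < 0 → S.coeff x i = 0}

/-- The Gauss norm on `Γ`. -/
noncomputable def gnorm (x : S.Γ) : ℝ := sSup (Set.range fun i => S.abv (S.coeff x i))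

end GammaSetting

/-!
`U` is factored by successive approximation: if `U - P N` has coefficients of absolute value at
most `δ`, moving its part in positive degrees into `P` and the rest into `N` leaves an error of
size at most `|π| δ`, since `P - 1` and `N - 1` stay `|π|`-small; the approximations converge
coefficientwise because `O` is complete.

Everything else rests on the identity `U - 1 = A + B + A B` for `P = 1 + A`, `N = 1 + B`: in the
coefficient of degree `n` of `A B` only the products `Aₘ Bₙ₋ₘ` with `m ≥ max 1 n` occur. Read in
degrees `n ≤ 0`, this gives `|B| ≤ |π|` by induction upwards from `-∞`. Once `A` and `B` are
`|π|`-small, every pass through the identity gains a factor `|π|`, on the difference of two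
factorizations (uniqueness) as well as on the tails `n > a` of `A` and `n < -b` of `B`.
-/

lemma le_of_forall_le_max_pow {a δ c : ℝ} (hc0 : 0 ≤ c) (hc1 : c < 1) (hδ : 0 ≤ δ)
    (h : ∀ k : ℕ, a ≤ max δ (c ^ k)) : a ≤ δ := by
  have := tendsto_const_nhds (x := δ) |>.max (tendsto_pow_atTop_nhds_zero_of_lt_one hc0 hc1)
  rw [max_eq_left hδ] at this
  exact ge_of_tendsto' this h

lemma lt_of_forall_lt_max_pow {a ε c : ℝ} (hc1 : c < 1) (hε : 0 < ε)
    (h : ∀ k : ℕ, a < max ε (c ^ k)) : a < ε := by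
  obtain ⟨k, hk⟩ := exists_pow_lt_of_lt_one hε hc1
  simpa [max_eq_left hk.le] using h k

lemma mul_max_pow_le {δ c : ℝ} (hc0 : 0 ≤ c) (hc1 : c ≤ 1) (hδ : 0 ≤ δ) (k : ℕ) :
    c * max δ (c ^ k) ≤ max δ (c ^ (k + 1)) := by
  rw [mul_max_of_nonneg _ _ hc0, pow_succ']
  exact max_le_max_right _ (mul_le_of_le_one_left hδ hc1)

namespace GammaSetting

variable {p : ℕ} [Fact p.Prime] (S : GammaSetting p)

section AbsoluteValue

def absoluteValue : AbsoluteValue S.O ℝ where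
  toFun := S.abv
  map_mul' := S.abv_mul
  nonneg' := S.abv_nonneg
  eq_zero' := S.abv_eq_zero
  add_le' x y :=
    (S.abv_add_le x y).trans (max_le_add_of_nonneg (S.abv_nonneg x) (S.abv_nonneg y))

lemma abv_zero : S.abv 0 = 0 := S.absoluteValue.map_zero

lemma abv_neg (x : S.O) : S.abv (-x) = S.abv x := S.absoluteValue.map_neg x

lemma abv_pos {x : S.O} (hx : x ≠ 0) : 0 < S.abv x := S.absoluteValue.pos hx

lemma abv_sub_le (x y : S.O) : S.abv (x - y) ≤ max (S.abv x) (S.abv y) := by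
  simpa only [sub_eq_add_neg, abv_neg] using S.abv_add_le x (-y)

lemma abv_sum_lt {β : Type*} {s : Finset β} {f : β → S.O} {c : ℝ} (hc : 0 < c)
    (h : ∀ i ∈ s, S.abv (f i) < c) : S.abv (∑ i ∈ s, f i) < c := by
  rcases s.eq_empty_or_nonempty with rfl | hs
  · simpa [abv_zero] using hc
  · obtain ⟨i, hi, hle⟩ := IsNonarchimedean.finset_image_add_of_nonempty S.abv_add_le f hs
    exact hle.trans_lt (h i hi)

lemma abv_lt_one_of_irreducible {π : S.O} (hπ : Irreducible π) : S.abv π < 1 :=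
  (S.abv_le_one π).lt_of_ne fun h => hπ.not_isUnit ((S.isUnit_iff_abv π).2 h)

lemma abv_le_of_dvd {π x : S.O} (h : π ∣ x) : S.abv x ≤ S.abv π := by
  obtain ⟨d, rfl⟩ := h
  rw [S.abv_mul]
  exact mul_le_of_le_one_right (S.abv_nonneg π) (S.abv_le_one d)

lemma exists_abv_sub_le_pow {c : ℝ} (hc0 : 0 ≤ c) (hc1 : c < 1) (f : ℕ → S.O)
    (hf : ∀ k, S.abv (f (k + 1) - f k) ≤ c ^ (k + 1)) :
    ∃ x, ∀ k, S.abv (x - f k) ≤ c ^ (k + 1) := by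
  have tail : ∀ k l, k ≤ l → S.abv (f l - f k) ≤ c ^ (k + 1) := by
    intro k l hkl
    induction l, hkl using Nat.le_induction with
    | base => simpa [abv_zero] using pow_nonneg hc0 _
    | succ l hkl ih =>
      rw [← sub_add_sub_cancel _ (f l)]
      exact (S.abv_add_le _ _).trans
        (max_le ((hf l).trans (pow_le_pow_of_le_one hc0 hc1.le (by omega))) ih)
  obtain ⟨x, hx⟩ := S.complete f fun ε hε => by
    obtain ⟨K, hK⟩ := exists_pow_lt_of_lt_one hε hc1
    have hK' : c ^ (K + 1) < ε := (pow_le_pow_of_le_one hc0 hc1.le K.le_succ).trans_lt hK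
    refine ⟨K, fun a ha b hb => ?_⟩
    rw [← sub_sub_sub_cancel_right _ _ (f K)]
    exact (S.abv_sub_le _ _).trans_lt
      (max_lt ((tail K a ha).trans_lt hK') ((tail K b hb).trans_lt hK'))
  refine ⟨x, fun k => le_of_forall_gt_imp_ge_of_dense fun ε hε => ?_⟩
  obtain ⟨N, hN⟩ := hx ε ((pow_nonneg hc0 _).trans_lt hε)
  rw [← sub_sub_sub_cancel_left _ _ (f (max N k))]
  exact (S.abv_sub_le _ _).trans
    (max_le ((tail k _ (le_max_right N k)).trans hε.le) (hN _ (le_max_left N k)).le)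

lemma eq_zero_of_forall_abv_le_pow {x : S.O} {c : ℝ} (hc0 : 0 ≤ c) (hc1 : c < 1)
    (h : ∀ k, S.abv x ≤ c ^ (k + 1)) : x = 0 := by
  rw [← S.abv_eq_zero]
  exact le_antisymm (ge_of_tendsto'
    ((tendsto_pow_atTop_nhds_zero_of_lt_one hc0 hc1).comp (Filter.tendsto_add_atTop_nat 1)) h)
    (S.abv_nonneg x)

end AbsoluteValue

section Coefficients

def coeffHom (n : ℤ) : S.Γ →+ S.O := AddMonoidHom.mk' (S.coeff · n) (S.coeff_add · · n)

lemma coeff_zero (n : ℤ) : S.coeff 0 n = 0 := (S.coeffHom n).map_zero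

lemma coeff_sub (x y : S.Γ) (n : ℤ) : S.coeff (x - y) n = S.coeff x n - S.coeff y n :=
  (S.coeffHom n).map_sub x y

lemma coeff_neg (x : S.Γ) (n : ℤ) : S.coeff (-x) n = -S.coeff x n := (S.coeffHom n).map_neg x

lemma eventually_atBot_abv_coeff_lt (x : S.Γ) {ε : ℝ} (hε : 0 < ε) (hε1 : ε < 1) :
    ∀ᶠ n in Filter.atBot, S.abv (S.coeff x n) < ε := by
  obtain ⟨N, hN⟩ := S.coeff_bddBelow x ε hε hε1
  exact Filter.eventually_atBot.2 ⟨N - 1, fun n hn => hN n (by omega)⟩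

lemma abv_coeff_mul_lt {x y : S.Γ} {n : ℤ} {c : ℝ} (hc : 0 < c)
    (h : ∀ i, S.abv (S.coeff x i) * S.abv (S.coeff y (n - i)) < c) :
    S.abv (S.coeff (x * y) n) < c := by
  obtain ⟨s, hs⟩ := S.coeff_mul x y n c hc
  rw [← sub_add_cancel (S.coeff (x * y) n) (∑ i ∈ s, S.coeff x i * S.coeff y (n - i))]
  refine (S.abv_add_le _ _).trans_lt (max_lt (hs s subset_rfl) (S.abv_sum_lt hc fun i _ => ?_))
  rw [S.abv_mul]
  exact h i

lemma exists_coeff_eq_posPart (x : S.Γ) :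
    ∃ y, S.coeff y = fun n => if 0 < n then S.coeff x n else 0 :=
  S.coeff_surjective _ fun ε hε _ => ⟨1, fun n hn => by
    rw [if_neg (by omega), abv_zero]
    exact hε⟩

noncomputable def posPart (x : S.Γ) : S.Γ := (S.exists_coeff_eq_posPart x).choose

lemma coeff_posPart (x : S.Γ) (n : ℤ) :
    S.coeff (S.posPart x) n = if 0 < n then S.coeff x n else 0 :=
  congrFun (S.exists_coeff_eq_posPart x).choose_spec n

lemma exists_coeff_sub_le_pow {c : ℝ} (hc0 : 0 ≤ c) (hc1 : c < 1) (F : ℕ → S.Γ)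
    (hF : ∀ k n, S.abv (S.coeff (F (k + 1) - F k) n) ≤ c ^ (k + 1)) :
    ∃ x, ∀ k n, S.abv (S.coeff (x - F k) n) ≤ c ^ (k + 1) := by
  choose g hg using fun n => S.exists_abv_sub_le_pow hc0 hc1 (fun k => S.coeff (F k) n)
    fun k => by simpa only [coeff_sub] using hF k n
  obtain ⟨x, hx⟩ := S.coeff_surjective g fun ε hε hε1 => by
    obtain ⟨K, hK⟩ := exists_pow_lt_of_lt_one hε hc1
    obtain ⟨N, hN⟩ := S.coeff_bddBelow (F K) ε hε hε1
    refine ⟨N, fun n hn => ?_⟩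
    rw [← sub_add_cancel (g n) (S.coeff (F K) n)]
    exact (S.abv_add_le _ _).trans_lt (max_lt
      ((hg n K).trans_lt ((pow_le_pow_of_le_one hc0 hc1.le K.le_succ).trans_lt hK)) (hN n hn))
  exact ⟨x, fun k n => by simpa only [coeff_sub, hx] using hg n k⟩

end Coefficients

section Matrices

variable {ι : Type*}

def NormLE (X : Matrix ι ι S.Γ) (c : ℝ) : Prop := ∀ i j n, S.abv (S.coeff (X i j) n) ≤ c

def PosSupported (X : Matrix ι ι S.Γ) : Prop :=
  ∀ i j, ∀ n : ℤ, n ≤ 0 → S.coeff (X i j) n = 0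

def NonposSupported (X : Matrix ι ι S.Γ) : Prop :=
  ∀ i j, ∀ n : ℤ, 0 < n → S.coeff (X i j) n = 0

variable {S}

lemma coeff_one_of_ne_zero [DecidableEq ι] {n : ℤ} (hn : n ≠ 0) (i j : ι) :
    S.coeff ((1 : Matrix ι ι S.Γ) i j) n = 0 := by
  by_cases h : i = j <;> simp [Matrix.one_apply, h, S.coeff_one, hn, coeff_zero]

lemma coeff_sub_one_of_ne_zero [DecidableEq ι] (X : Matrix ι ι S.Γ) {n : ℤ} (hn : n ≠ 0)
    (i j : ι) :
    S.coeff ((X - 1) i j) n = S.coeff (X i j) n := by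
  rw [Matrix.sub_apply, coeff_sub, coeff_one_of_ne_zero hn, sub_zero]

lemma normLE_one (X : Matrix ι ι S.Γ) : S.NormLE X 1 := fun _ _ _ => S.abv_le_one _

lemma normLE_zero {c : ℝ} (hc : 0 ≤ c) : S.NormLE (0 : Matrix ι ι S.Γ) c := fun _ _ n => by
  simpa [coeff_zero, abv_zero] using hc

lemma NormLE.mono {X : Matrix ι ι S.Γ} {a b : ℝ} (hX : S.NormLE X a) (hab : a ≤ b) :
    S.NormLE X b := fun i j n => (hX i j n).trans hab

lemma NormLE.add {X Y : Matrix ι ι S.Γ} {c : ℝ} (hX : S.NormLE X c) (hY : S.NormLE Y c) :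
    S.NormLE (X + Y) c := fun i j n => by
  rw [Matrix.add_apply, S.coeff_add]
  exact (S.abv_add_le _ _).trans (max_le (hX i j n) (hY i j n))

lemma NormLE.neg {X : Matrix ι ι S.Γ} {c : ℝ} (hX : S.NormLE X c) : S.NormLE (-X) c :=
  fun i j n => by simpa only [Matrix.neg_apply, coeff_neg, abv_neg] using hX i j n

lemma NormLE.sub {X Y : Matrix ι ι S.Γ} {c : ℝ} (hX : S.NormLE X c) (hY : S.NormLE Y c) :
    S.NormLE (X - Y) c := sub_eq_add_neg X Y ▸ hX.add hY.neg

lemma eq_zero_of_forall_normLE_pow {X : Matrix ι ι S.Γ} {c : ℝ} (hc0 : 0 ≤ c) (hc1 : c < 1)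
    (hX : ∀ k : ℕ, S.NormLE X (c ^ (k + 1))) : X = 0 := by
  ext i j
  refine S.coeff_injective (funext fun n => ?_)
  rw [Matrix.zero_apply, coeff_zero]
  exact S.eq_zero_of_forall_abv_le_pow hc0 hc1 fun k => hX k i j n

lemma exists_normLE_sub_pow {c : ℝ} (hc0 : 0 ≤ c) (hc1 : c < 1) (F : ℕ → Matrix ι ι S.Γ)
    (hF : ∀ k, S.NormLE (F (k + 1) - F k) (c ^ (k + 1))) :
    ∃ X, ∀ k, S.NormLE (X - F k) (c ^ (k + 1)) := by
  choose X hX using fun i j =>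
    S.exists_coeff_sub_le_pow hc0 hc1 (fun k => F k i j) fun k => hF k i j
  exact ⟨Matrix.of X, fun k i j => hX i j k⟩

lemma PosSupported.add {X Y : Matrix ι ι S.Γ} (hX : S.PosSupported X) (hY : S.PosSupported Y) :
    S.PosSupported (X + Y) := fun i j n hn => by
  rw [Matrix.add_apply, S.coeff_add, hX i j n hn, hY i j n hn, add_zero]

lemma PosSupported.sub {X Y : Matrix ι ι S.Γ} (hX : S.PosSupported X) (hY : S.PosSupported Y) :
    S.PosSupported (X - Y) := fun i j n hn => by
  rw [Matrix.sub_apply, coeff_sub, hX i j n hn, hY i j n hn, sub_zero]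

lemma NonposSupported.add {X Y : Matrix ι ι S.Γ} (hX : S.NonposSupported X)
    (hY : S.NonposSupported Y) : S.NonposSupported (X + Y) := fun i j n hn => by
  rw [Matrix.add_apply, S.coeff_add, hX i j n hn, hY i j n hn, add_zero]

lemma NonposSupported.sub {X Y : Matrix ι ι S.Γ} (hX : S.NonposSupported X)
    (hY : S.NonposSupported Y) : S.NonposSupported (X - Y) := fun i j n hn => by
  rw [Matrix.sub_apply, coeff_sub, hX i j n hn, hY i j n hn, sub_zero]

lemma NonposSupported.sub_one [DecidableEq ι] {X : Matrix ι ι S.Γ}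
    (hX : S.NonposSupported X) : S.NonposSupported (X - 1) := fun i j n hn => by
  rw [coeff_sub_one_of_ne_zero X hn.ne', hX i j n hn]

lemma PosSupported.normLE_of_add {X Y : Matrix ι ι S.Γ} {c : ℝ} (hX : S.PosSupported X)
    (hY : S.NonposSupported Y) (h : S.NormLE (X + Y) c) : S.NormLE X c ∧ S.NormLE Y c := by
  have hc i j n : 0 ≤ c := (S.abv_nonneg _).trans (h i j n)
  refine ⟨fun i j n => ?_, fun i j n => ?_⟩ <;> rcases le_or_gt n 0 with hn | hn
  · simpa [hX i j n hn, abv_zero] using hc i j n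
  · simpa [S.coeff_add, hY i j n hn] using h i j n
  · simpa [S.coeff_add, hX i j n hn] using h i j n
  · simpa [hY i j n hn, abv_zero] using hc i j n

lemma PosSupported.of_forall_normLE_sub_pow {c : ℝ} (hc0 : 0 ≤ c) (hc1 : c < 1)
    {X : Matrix ι ι S.Γ} {F : ℕ → Matrix ι ι S.Γ} (hF : ∀ k, S.PosSupported (F k))
    (hX : ∀ k, S.NormLE (X - F k) (c ^ (k + 1))) : S.PosSupported X := fun i j n hn =>
  S.eq_zero_of_forall_abv_le_pow hc0 hc1 fun k => by
    simpa [coeff_sub, hF k i j n hn] using hX k i j n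

lemma NonposSupported.of_forall_normLE_sub_pow {c : ℝ} (hc0 : 0 ≤ c) (hc1 : c < 1)
    {X : Matrix ι ι S.Γ} {F : ℕ → Matrix ι ι S.Γ} (hF : ∀ k, S.NonposSupported (F k))
    (hX : ∀ k, S.NormLE (X - F k) (c ^ (k + 1))) : S.NonposSupported X := fun i j n hn =>
  S.eq_zero_of_forall_abv_le_pow hc0 hc1 fun k => by
    simpa [coeff_sub, hF k i j n hn] using hX k i j n

lemma posSupported_map_posPart (X : Matrix ι ι S.Γ) : S.PosSupported (X.map S.posPart) :=
  fun i j n hn => by rw [Matrix.map_apply, coeff_posPart, if_neg (by omega)]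

lemma nonposSupported_sub_map_posPart (X : Matrix ι ι S.Γ) :
    S.NonposSupported (X - X.map S.posPart) := fun i j n hn => by
  rw [Matrix.sub_apply, coeff_sub, Matrix.map_apply, coeff_posPart, if_pos hn, sub_self]

lemma NormLE.map_posPart {X : Matrix ι ι S.Γ} {c : ℝ} (hc : 0 ≤ c) (hX : S.NormLE X c) :
    S.NormLE (X.map S.posPart) c := fun i j n => by
  rw [Matrix.map_apply, coeff_posPart]
  split_ifs
  · exact hX i j n
  · simpa [abv_zero] using hc

lemma NormLE.sub_map_posPart {X : Matrix ι ι S.Γ} {c : ℝ} (hc : 0 ≤ c) (hX : S.NormLE X c) :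
    S.NormLE (X - X.map S.posPart) c :=
  hX.sub (hX.map_posPart hc)

section Mul

variable [Fintype ι]

lemma coeff_matrix_mul (X Y : Matrix ι ι S.Γ) (i j : ι) (n : ℤ) :
    S.coeff ((X * Y) i j) n = ∑ l, S.coeff (X i l * Y l j) n :=
  map_sum (S.coeffHom n) _ _

lemma abv_coeff_matrix_mul_lt {X Y : Matrix ι ι S.Γ} {i j : ι} {n : ℤ} {c : ℝ} (hc : 0 < c)
    (h : ∀ l m, S.abv (S.coeff (X i l) m) * S.abv (S.coeff (Y l j) (n - m)) < c) :
    S.abv (S.coeff ((X * Y) i j) n) < c := by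
  rw [coeff_matrix_mul]
  exact S.abv_sum_lt hc fun l _ => S.abv_coeff_mul_lt hc (h l)

lemma NormLE.mul {X Y : Matrix ι ι S.Γ} {a b : ℝ} (hX : S.NormLE X a) (hY : S.NormLE Y b) :
    S.NormLE (X * Y) (a * b) := fun i j n => by
  have hab : 0 ≤ a * b :=
    mul_nonneg ((S.abv_nonneg _).trans (hX i i 0)) ((S.abv_nonneg _).trans (hY i j 0))
  refine le_of_forall_gt_imp_ge_of_dense fun c hc =>
    (abv_coeff_matrix_mul_lt (hab.trans_lt hc) fun l m => lt_of_le_of_lt ?_ hc).le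
  exact mul_le_mul (hX i l m) (hY l j _) (S.abv_nonneg _) ((S.abv_nonneg _).trans (hX i l m))

lemma abv_coeff_mul_lt_of_supported {X Y : Matrix ι ι S.Γ} (hX : S.PosSupported X)
    (hY : S.NonposSupported Y) {i j : ι} {n : ℤ} {c : ℝ} (hc : 0 < c)
    (h : ∀ l m, 0 < m → n ≤ m →
      S.abv (S.coeff (X i l) m) * S.abv (S.coeff (Y l j) (n - m)) < c) :
    S.abv (S.coeff ((X * Y) i j) n) < c := by
  refine abv_coeff_matrix_mul_lt hc fun l m => ?_
  rcases le_or_gt m 0 with hm | hm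
  · simpa [hX i l m hm, abv_zero] using hc
  rcases lt_or_ge m n with hmn | hnm
  · simpa [hY l j (n - m) (by omega), abv_zero] using hc
  exact h l m hm hnm

lemma abv_coeff_mul_le_of_supported {X Y : Matrix ι ι S.Γ} (hX : S.PosSupported X)
    (hY : S.NonposSupported Y) {i j : ι} {n : ℤ} {c : ℝ} (hc : 0 ≤ c)
    (h : ∀ l m, 0 < m → n ≤ m →
      S.abv (S.coeff (X i l) m) * S.abv (S.coeff (Y l j) (n - m)) ≤ c) :
    S.abv (S.coeff ((X * Y) i j) n) ≤ c :=
  le_of_forall_gt_imp_ge_of_dense fun _ hc' => (abv_coeff_mul_lt_of_supported hX hY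
    (hc.trans_lt hc') fun l m hm hnm => (h l m hm hnm).trans_lt hc').le

theorem normLE_of_normLE_add_add_mul_add_mul {c δ : ℝ} (hc0 : 0 ≤ c) (hc1 : c < 1) (hδ : 0 ≤ δ)
    {X Y A B : Matrix ι ι S.Γ} (hX : S.PosSupported X) (hY : S.NonposSupported Y)
    (hA : S.NormLE A c) (hB : S.NormLE B c) (h : S.NormLE (X + Y + X * B + A * Y) δ) :
    S.NormLE X δ ∧ S.NormLE Y δ := by
  have bootstrap (k : ℕ) : S.NormLE X (max δ (c ^ k)) ∧ S.NormLE Y (max δ (c ^ k)) := by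
    induction k with
    | zero => exact ⟨(normLE_one X).mono (by simp), (normLE_one Y).mono (by simp)⟩
    | succ k ih =>
      have hmul := mul_max_pow_le hc0 hc1.le hδ k
      refine hX.normLE_of_add hY ?_
      rw [show X + Y = X + Y + X * B + A * Y - X * B - A * Y by abel]
      exact ((h.mono (le_max_left _ _)).sub
        ((ih.1.mul hB).mono (mul_comm (max δ (c ^ k)) c ▸ hmul))).sub ((hA.mul ih.2).mono hmul)
  exact ⟨fun i j n => le_of_forall_le_max_pow hc0 hc1 hδ fun k => (bootstrap k).1 i j n,
    fun i j n => le_of_forall_le_max_pow hc0 hc1 hδ fun k => (bootstrap k).2 i j n⟩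

end Mul

end Matrices

section Factorization

variable {ι : Type*} [Fintype ι] [DecidableEq ι]

structure IsApproxFactorization (c δ : ℝ) (U P N : Matrix ι ι S.Γ) : Prop where
  posSupported : S.PosSupported (P - 1)
  nonposSupported : S.NonposSupported N
  normLE_left : S.NormLE (P - 1) c
  normLE_right : S.NormLE (N - 1) c
  normLE_error : S.NormLE (U - P * N) δ

structure IsPlusMinusFactorization (U P N : Matrix ι ι S.Γ) : Prop where
  posSupported : S.PosSupported (P - 1)
  nonposSupported : S.NonposSupported N
  eq_mul : U = P * N

variable {S}

lemma coeff_sub_one_of_eq_mul {U P N : Matrix ι ι S.Γ} (hUPN : U = P * N) (i j : ι) (n : ℤ) :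
    S.coeff ((U - 1) i j) n = S.coeff ((P - 1) i j) n + S.coeff ((N - 1) i j) n +
      S.coeff (((P - 1) * (N - 1)) i j) n := by
  rw [hUPN, show P * N - 1 = (P - 1) + (N - 1) + (P - 1) * (N - 1) by noncomm_ring]
  simp only [Matrix.add_apply, S.coeff_add]

theorem normLE_sub_of_normLE_mul_sub_mul {c δ : ℝ} (hc0 : 0 ≤ c) (hc1 : c < 1) (hδ : 0 ≤ δ)
    {P N P' N' : Matrix ι ι S.Γ} (hP : S.PosSupported (P - 1)) (hP' : S.PosSupported (P' - 1))
    (hN : S.NonposSupported N) (hN' : S.NonposSupported N') (hP'c : S.NormLE (P' - 1) c)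
    (hNc : S.NormLE (N - 1) c) (h : S.NormLE (P' * N' - P * N) δ) :
    S.NormLE (P' - P) δ ∧ S.NormLE (N' - N) δ :=
  normLE_of_normLE_add_add_mul_add_mul hc0 hc1 hδ (sub_sub_sub_cancel_right P' P 1 ▸ hP'.sub hP)
    (hN'.sub hN) hP'c hNc (by convert h using 1; noncomm_ring)

theorem IsApproxFactorization.exists_next {c δ : ℝ} {U P N : Matrix ι ι S.Γ}
    (h : S.IsApproxFactorization c δ U P N) (hδ0 : 0 ≤ δ) (hδc : δ ≤ c) :
    ∃ P' N', S.IsApproxFactorization c (c * δ) U P' N' := by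
  set D := U - P * N with hD
  have hDp : S.NormLE (D.map S.posPart) δ := h.normLE_error.map_posPart hδ0
  have hDm : S.NormLE (D - D.map S.posPart) δ := h.normLE_error.sub_map_posPart hδ0
  refine ⟨P + D.map S.posPart, N + (D - D.map S.posPart), ⟨?_, ?_, ?_, ?_, ?_⟩⟩
  · rw [add_sub_right_comm]
    exact h.posSupported.add (posSupported_map_posPart D)
  · exact h.nonposSupported.add (nonposSupported_sub_map_posPart D)
  · rw [add_sub_right_comm]
    exact h.normLE_left.add (hDp.mono hδc)
  · rw [add_sub_right_comm]
    exact h.normLE_right.add (hDm.mono hδc)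
  · rw [show U - (P + D.map S.posPart) * (N + (D - D.map S.posPart)) =
        -(D.map S.posPart * (N - 1) + (P - 1) * (D - D.map S.posPart) +
          D.map S.posPart * (D - D.map S.posPart)) by rw [hD]; noncomm_ring]
    refine ((((hDp.mul h.normLE_right).mono (mul_comm δ c).le).add
      (h.normLE_left.mul hDm)).add ((hDp.mul hDm).mono ?_)).neg
    exact mul_le_mul_of_nonneg_right hδc hδ0

theorem exists_isApproxFactorization_pow {c : ℝ} (hc0 : 0 ≤ c) (hc1 : c ≤ 1)
    {U : Matrix ι ι S.Γ} (hU : S.NormLE (U - 1) c) (k : ℕ) :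
    ∃ P N, S.IsApproxFactorization c (c ^ (k + 1)) U P N := by
  induction k with
  | zero =>
    refine ⟨1, 1, ⟨?_, fun i j n hn => coeff_one_of_ne_zero hn.ne' i j, ?_, ?_,
      by simpa using hU⟩⟩
    · simp [PosSupported, coeff_zero]
    · simpa using normLE_zero hc0
    · simpa using normLE_zero hc0
  | succ k ih =>
    obtain ⟨P, N, h⟩ := ih
    rw [pow_succ']
    exact h.exists_next (pow_nonneg hc0 _) (pow_le_of_le_one hc0 hc1 k.succ_ne_zero)

theorem exists_isPlusMinusFactorization {c : ℝ} (hc0 : 0 ≤ c) (hc1 : c < 1)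
    {U : Matrix ι ι S.Γ} (hU : S.NormLE (U - 1) c) :
    ∃ P N, S.IsPlusMinusFactorization U P N := by
  choose P N h using exists_isApproxFactorization_pow hc0 hc1.le hU
  have cauchy (k : ℕ) := normLE_sub_of_normLE_mul_sub_mul hc0 hc1 (pow_nonneg hc0 _)
    (h k).posSupported (h (k + 1)).posSupported (h k).nonposSupported (h (k + 1)).nonposSupported
    (h (k + 1)).normLE_left (h k).normLE_right
    (sub_sub_sub_cancel_left (P k * N k) (P (k + 1) * N (k + 1)) U ▸ (h k).normLE_error.sub
      ((h (k + 1)).normLE_error.mono (pow_le_pow_of_le_one hc0 hc1.le (k + 1).le_succ)))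
  obtain ⟨P', hP'⟩ := exists_normLE_sub_pow hc0 hc1 P fun k => (cauchy k).1
  obtain ⟨N', hN'⟩ := exists_normLE_sub_pow hc0 hc1 N fun k => (cauchy k).2
  refine ⟨P', N', ⟨?_, ?_, ?_⟩⟩
  · exact .of_forall_normLE_sub_pow hc0 hc1 (fun k => (h k).posSupported) fun k =>
      sub_sub_sub_cancel_right P' (P k) 1 ▸ hP' k
  · exact .of_forall_normLE_sub_pow hc0 hc1 (fun k => (h k).nonposSupported) hN'
  · refine sub_eq_zero.1 (eq_zero_of_forall_normLE_pow hc0 hc1 fun k => ?_)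
    rw [show U - P' * N' = (U - P k * N k) - (P' - P k) * N k - P' * (N' - N k) by noncomm_ring]
    exact ((h k).normLE_error.sub (((hP' k).mul (normLE_one _)).mono (mul_one _).le)).sub
      (((normLE_one _).mul (hN' k)).mono (one_mul _).le)

namespace IsPlusMinusFactorization

variable {U P N : Matrix ι ι S.Γ} {c : ℝ}

theorem normLE_sub_one (hf : S.IsPlusMinusFactorization U P N) (hc0 : 0 < c) (hc1 : c < 1)
    (hU : S.NormLE (U - 1) c) : S.NormLE (P - 1) c ∧ S.NormLE (N - 1) c := by
  have hN1 := hf.nonposSupported.sub_one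
  obtain ⟨M, hM⟩ := Filter.eventually_atBot.1 <| Filter.eventually_all.2 fun i =>
    Filter.eventually_all.2 fun j => S.eventually_atBot_abv_coeff_lt ((N - 1) i j) hc0 hc1
  have hN : S.NormLE (N - 1) c := fun i j n => by
    induction n using Int.strongRec (m := M) generalizing i j with
    | lt n hn => exact (hM n hn.le i j).le
    | ge n _ ih =>
      rcases lt_or_ge 0 n with hn | hn
      · rw [hN1 i j n hn, abv_zero]
        exact hc0.le
      have e := coeff_sub_one_of_eq_mul hf.eq_mul i j n
      rw [hf.posSupported i j n hn, zero_add] at e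
      rw [eq_sub_of_add_eq e.symm]
      refine (S.abv_sub_le _ _).trans (max_le (hU i j n)
        (abv_coeff_mul_le_of_supported hf.posSupported hN1 hc0.le fun l m hm _ => ?_))
      simpa using
        mul_le_mul (S.abv_le_one _) (ih (n - m) (by omega) l j) (S.abv_nonneg _) zero_le_one
  refine ⟨?_, hN⟩
  rw [show P - 1 = (U - 1) - (N - 1) - (P - 1) * (N - 1) by rw [hf.eq_mul]; noncomm_ring]
  exact (hU.sub hN).sub (((normLE_one _).mul hN).mono (one_mul c).le)

theorem unique (hf : S.IsPlusMinusFactorization U P N) (hc0 : 0 < c) (hc1 : c < 1)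
    (hU : S.NormLE (U - 1) c) {P' N' : Matrix ι ι S.Γ}
    (hf' : S.IsPlusMinusFactorization U P' N') : P' = P ∧ N' = N := by
  have h := normLE_sub_of_normLE_mul_sub_mul hc0.le hc1 le_rfl hf.posSupported hf'.posSupported
    hf.nonposSupported hf'.nonposSupported (hf'.normLE_sub_one hc0 hc1 hU).1
    (hf.normLE_sub_one hc0 hc1 hU).2
    (by rw [← hf.eq_mul, ← hf'.eq_mul, sub_self]; exact normLE_zero le_rfl)
  exact ⟨sub_eq_zero.1 (eq_zero_of_forall_normLE_pow hc0.le hc1 fun _ => h.1.mono (by positivity)),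
    sub_eq_zero.1 (eq_zero_of_forall_normLE_pow hc0.le hc1 fun _ => h.2.mono (by positivity))⟩

theorem abv_coeff_lt_of_pos (hf : S.IsPlusMinusFactorization U P N) (hc0 : 0 < c) (hc1 : c < 1)
    (hU : S.NormLE (U - 1) c) {ε : ℝ} (hε : 0 < ε) {a : ℤ}
    (hUa : ∀ n : ℤ, a < n → ∀ i j, S.abv (S.coeff (U i j) n) < ε) :
    ∀ n : ℤ, a < n → 1 ≤ n → ∀ i j, S.abv (S.coeff (P i j) n) < ε := by
  obtain ⟨hPc, hNc⟩ := hf.normLE_sub_one hc0 hc1 hU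
  have hN1 := hf.nonposSupported.sub_one
  suffices h : ∀ k : ℕ, ∀ n : ℤ, a < n → 1 ≤ n → ∀ i j,
      S.abv (S.coeff ((P - 1) i j) n) < max ε (c ^ k) by
    intro n ha hn i j
    rw [← coeff_sub_one_of_ne_zero P (by omega)]
    exact lt_of_forall_lt_max_pow hc1 hε fun k => h k n ha hn i j
  intro k
  induction k with
  | zero => exact fun n _ _ i j => (hPc i j n).trans_lt (hc1.trans_le (by simp))
  | succ k ih =>
    intro n ha hn i j
    have e := coeff_sub_one_of_eq_mul hf.eq_mul i j n
    rw [coeff_sub_one_of_ne_zero U (by omega), hN1 i j n (by omega), add_zero] at e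
    rw [eq_sub_of_add_eq e.symm]
    refine (S.abv_sub_le _ _).trans_lt (max_lt ((hUa n ha i j).trans_le (le_max_left _ _))
      (abv_coeff_mul_lt_of_supported hf.posSupported hN1 (by positivity) fun l m hm hnm => ?_))
    calc _ ≤ S.abv (S.coeff ((P - 1) i l) m) * c :=
          mul_le_mul_of_nonneg_left (hNc l j _) (S.abv_nonneg _)
      _ < max ε (c ^ k) * c := mul_lt_mul_of_pos_right (ih m (by omega) (by omega) i l) hc0
      _ ≤ max ε (c ^ (k + 1)) := mul_comm c (max ε (c ^ k)) ▸ mul_max_pow_le hc0.le hc1.le hε.le k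

theorem abv_coeff_lt_of_neg (hf : S.IsPlusMinusFactorization U P N) (hc0 : 0 < c) (hc1 : c < 1)
    (hU : S.NormLE (U - 1) c) {ε : ℝ} (hε : 0 < ε) {b : ℤ}
    (hUb : ∀ n : ℤ, n < -b → ∀ i j, S.abv (S.coeff (U i j) n) < ε) :
    ∀ n : ℤ, n < -b → n ≤ -1 → ∀ i j, S.abv (S.coeff (N i j) n) < ε := by
  obtain ⟨hPc, hNc⟩ := hf.normLE_sub_one hc0 hc1 hU
  have hN1 := hf.nonposSupported.sub_one
  suffices h : ∀ k : ℕ, ∀ n : ℤ, n < -b → n ≤ -1 → ∀ i j,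
      S.abv (S.coeff ((N - 1) i j) n) < max ε (c ^ k) by
    intro n hb hn i j
    rw [← coeff_sub_one_of_ne_zero N (by omega)]
    exact lt_of_forall_lt_max_pow hc1 hε fun k => h k n hb hn i j
  intro k
  induction k with
  | zero => exact fun n _ _ i j => (hNc i j n).trans_lt (hc1.trans_le (by simp))
  | succ k ih =>
    intro n hb hn i j
    have e := coeff_sub_one_of_eq_mul hf.eq_mul i j n
    rw [coeff_sub_one_of_ne_zero U (by omega), hf.posSupported i j n (by omega), zero_add] at e
    rw [eq_sub_of_add_eq e.symm]
    refine (S.abv_sub_le _ _).trans_lt (max_lt ((hUb n hb i j).trans_le (le_max_left _ _))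
      (abv_coeff_mul_lt_of_supported hf.posSupported hN1 (by positivity) fun l m hm _ => ?_))
    calc _ ≤ c * S.abv (S.coeff ((N - 1) l j) (n - m)) :=
          mul_le_mul_of_nonneg_right (hPc i l m) (S.abv_nonneg _)
      _ < c * max ε (c ^ k) := mul_lt_mul_of_pos_left (ih (n - m) (by omega) (by omega) l j) hc0
      _ ≤ max ε (c ^ (k + 1)) := mul_max_pow_le hc0.le hc1.le hε.le k

end IsPlusMinusFactorization

end Factorization

end GammaSetting

/-- Factorization of matrices over `Γ`.  Let `U = ∑ₙ Uₙ tⁿ` be a square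
matrix over `Γ` such that `U ≡ 1 (mod π)`.  Then there exists a unique pair `(P, N)` of
matrices over `Γ` of the form `P = 1 + ∑_{n≥1} Aₙ tⁿ` and `N = C + ∑_{n≥1} Bₙ t⁻ⁿ`, with
`C` a matrix over `O`, such that `U = P · N`.  Moreover, for `ε > 0`: if `|Uₙ| < ε` for all
`n > a` then `|Aₙ| < ε` for all `n > a`; and if `|Uₙ| < ε` for all `n < -b` then
`|Bₙ| < ε` for all `n < -b`. -/
theorem matrix_plus_minus_factorization {p : ℕ} [Fact p.Prime] (S : GammaSetting p)
    (π : S.O) (hπ : Irreducible π) {r : ℕ}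
    (U : Matrix (Fin r) (Fin r) S.Γ)
    (hU : ∀ i j n, π ∣ S.coeff ((U - 1) i j) n) :
    ∃ P N : Matrix (Fin r) (Fin r) S.Γ,
      -- `P = 1 + ∑_{n ≥ 1} Aₙ tⁿ`
      (∀ i j, ∀ n : ℤ, n ≤ 0 → S.coeff ((P - 1) i j) n = 0) ∧
      -- `N = C + ∑_{n ≥ 1} Bₙ t⁻ⁿ`
      (∀ i j, ∀ n : ℤ, 0 < n → S.coeff (N i j) n = 0) ∧
      U = P * N ∧
      -- uniqueness of the pair `(P, N)`
      (∀ P' N' : Matrix (Fin r) (Fin r) S.Γ,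
        (∀ i j, ∀ n : ℤ, n ≤ 0 → S.coeff ((P' - 1) i j) n = 0) →
        (∀ i j, ∀ n : ℤ, 0 < n → S.coeff (N' i j) n = 0) →
        U = P' * N' → P' = P ∧ N' = N) ∧
      -- bound on the positive coefficients `Aₙ` of `P`
      (∀ ε : ℝ, 0 < ε → ∀ a : ℤ,
        (∀ n : ℤ, a < n → ∀ i j, S.abv (S.coeff (U i j) n) < ε) →
        ∀ n : ℤ, a < n → 1 ≤ n → ∀ i j, S.abv (S.coeff (P i j) n) < ε) ∧
      -- bound on the negative coefficients `Bₙ` of `N`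
      (∀ ε : ℝ, 0 < ε → ∀ b : ℤ,
        (∀ n : ℤ, n < -b → ∀ i j, S.abv (S.coeff (U i j) n) < ε) →
        ∀ n : ℤ, n < -b → n ≤ -1 → ∀ i j, S.abv (S.coeff (N i j) n) < ε) := by
  have hπ0 : 0 < S.abv π := S.abv_pos hπ.ne_zero
  have hπ1 : S.abv π < 1 := S.abv_lt_one_of_irreducible hπ
  have hUπ : S.NormLE (U - 1) (S.abv π) := fun i j n => S.abv_le_of_dvd (hU i j n)
  obtain ⟨P, N, hf⟩ := GammaSetting.exists_isPlusMinusFactorization hπ0.le hπ1 hUπ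
  exact ⟨P, N, hf.posSupported, hf.nonposSupported, hf.eq_mul,
    fun P' N' hP' hN' hUPN' => hf.unique hπ0 hπ1 hUπ ⟨hP', hN', hUPN'⟩,
    fun _ hε _ => hf.abv_coeff_lt_of_pos hπ0 hπ1 hUπ hε,
    fun _ hε _ => hf.abv_coeff_lt_of_neg hπ0 hπ1 hUπ hε⟩
end

section
/- Let x = Σ_{i∈ℤ} c_i t^i be a nonzero element of Γ_an,con. Then x is a unit in Γ_an,con if and only if the set {|c_i| : i ∈ ℤ} is bounded above. -/
open scoped Classical

/-- The analytic setting.  `F = O[1/p]` is the fraction field of a complete discrete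
valuation ring `O` which is a finite totally ramified extension of the Witt vectors of an
algebraically closed field `k` of characteristic `p` (encoded via the absolute value `abv`
with `abv p = 1/p`, discreteness, completeness, and algebraically closed residue field),
equipped with a Frobenius lift `σF`.  `Γac = Γ_{an,con}` is the ring of series
`∑_{n ∈ ℤ} cₙ tⁿ` with `cₙ ∈ F` such that `limsup_{n→+∞} |cₙ|^{1/n} ≤ 1` and
`|cₙ| ≤ p^{cn+d}` for all `n < 0`, for some constants `c, d > 0`; it is encoded by its
coefficient functionals `coeff`, and carries the standard Frobenius `frob = σ_t`
(acting by `σ` on coefficients and sending `t` to `t^p`). -/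
structure AnSetting (p : ℕ) [Fact p.Prime] where
  F : Type
  [fieldF : Field F]
  abv : F → ℝ
  abv_nonneg : ∀ x, 0 ≤ abv x
  abv_eq_zero : ∀ x, abv x = 0 ↔ x = 0
  abv_mul : ∀ x y, abv (x * y) = abv x * abv y
  abv_add_le : ∀ x y, abv (x + y) ≤ max (abv x) (abv y)
  abv_p : abv (p : F) = (p : ℝ)⁻¹
  m : ℕ
  m_pos : 0 < m
  abv_discrete : ∀ x : F, x ≠ 0 → ∃ n : ℤ, abv x = (p : ℝ) ^ ((n : ℝ) / (m : ℝ))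
  complete : ∀ f : ℕ → F,
    (∀ ε : ℝ, 0 < ε → ∃ N, ∀ a ≥ N, ∀ b ≥ N, abv (f a - f b) < ε) →
    ∃ x : F, ∀ ε : ℝ, 0 < ε → ∃ N, ∀ a ≥ N, abv (f a - x) < ε
  residue_algClosed : ∀ f : Polynomial F, f.Monic → (∀ i, abv (f.coeff i) ≤ 1) →
    0 < f.natDegree → ∃ x : F, abv x ≤ 1 ∧ abv (Polynomial.eval x f) < 1
  σF : F ≃+* F
  abv_σF : ∀ x, abv (σF x) = abv x
  σF_frob : ∀ x : F, abv x ≤ 1 → abv (σF x - x ^ p) < 1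
  Γac : Type
  [commΓac : CommRing Γac]
  coeff : Γac → ℤ → F
  coeff_injective : Function.Injective coeff
  coeff_add : ∀ x y i, coeff (x + y) i = coeff x i + coeff y i
  coeff_growth : ∀ (x : Γac) (ε : ℝ), 0 < ε → ∃ N : ℤ, 0 ≤ N ∧
    ∀ n : ℤ, N ≤ n → abv (coeff x n) ≤ (1 + ε) ^ n
  coeff_decay : ∀ x : Γac, ∃ c d : ℝ, 0 < c ∧ 0 < d ∧
    ∀ n : ℤ, n < 0 → abv (coeff x n) ≤ (p : ℝ) ^ (c * (n : ℝ) + d)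
  coeff_surjective : ∀ f : ℤ → F,
    (∀ ε : ℝ, 0 < ε → ∃ N : ℤ, 0 ≤ N ∧ ∀ n : ℤ, N ≤ n → abv (f n) ≤ (1 + ε) ^ n) →
    (∃ c d : ℝ, 0 < c ∧ 0 < d ∧ ∀ n : ℤ, n < 0 → abv (f n) ≤ (p : ℝ) ^ (c * (n : ℝ) + d)) →
    ∃ x, coeff x = f
  coeff_one : ∀ i, coeff 1 i = if i = 0 then 1 else 0
  t : Γac
  coeff_t : ∀ i, coeff t i = if i = 1 then 1 else 0
  const : F →+* Γac
  coeff_const : ∀ a i, coeff (const a) i = if i = 0 then a else 0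
  coeff_mul : ∀ (x y : Γac) (n : ℤ) (ε : ℝ), 0 < ε →
    ∃ S : Finset ℤ, ∀ T : Finset ℤ, S ⊆ T →
      abv (coeff (x * y) n - ∑ i ∈ T, coeff x i * coeff y (n - i)) < ε
  frob : Γac →+* Γac
  coeff_frob : ∀ x n, coeff (frob x) n =
    if (p : ℤ) ∣ n then σF (coeff x (n / (p : ℤ))) else 0

attribute [instance] AnSetting.fieldF AnSetting.commΓac

namespace AnSetting

variable {p : ℕ} [Fact p.Prime] (S : AnSetting p)

/-- The subring `Ω_an ⊆ Γ_{an,con}` of rigid analytic functions on the open unit disc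
(series with no negative-index coefficients), as a set. -/
def omegaAnSet : Set S.Γac := {x | ∀ i : ℤ, i < 0 → S.coeff x i = 0}

/-- The subring `Γ_con[1/p] ⊆ Γ_{an,con}`: the elements whose coefficients are bounded
above, as a set. -/
def conPSet : Set S.Γac := {x | ∃ C : ℝ, ∀ i : ℤ, S.abv (S.coeff x i) ≤ C}

/-- The subring `Γ_con ⊆ Γ_{an,con}`: the elements with integral coefficients, as a set. -/
def conSet : Set S.Γac := {x | ∀ i : ℤ, S.abv (S.coeff x i) ≤ 1}

/-- The subring `Ω = O[[t]] ⊆ Γ_{an,con}`, as a set. -/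
def omegaSet : Set S.Γac := {x | (∀ i : ℤ, S.abv (S.coeff x i) ≤ 1) ∧ ∀ i : ℤ, i < 0 → S.coeff x i = 0}

end AnSetting

/-!
For `ρ > 1` close to `1`, the Gauss norm `|x|_ρ = sup_n |x_n| ρ^(-n)` of a nonzero `x` is
attained, and at the least maximizing indices of `x` and `y` the coefficient of `x * y` has a
single dominant term. So `x * y = 1` forces `|x|_ρ |y|_ρ ≤ 1`, i.e. `|x_i| ≤ |y_j|⁻¹ ρ^(i+j)`;
letting `ρ → 1` bounds the coefficients of a unit.

Conversely, if the coefficients of `x` are bounded, discreteness of `|F^×|` makes their maximum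
attained. Dividing by the maximal coefficient of least index and shifting that index to `0` gives
`y` with `y_0 = 1`, `|y_n| ≤ 1`, and `|y_n| < 1` for `n < 0`; with the decay at `-∞` this gives
`|1 - y|_ρ ≤ ρ⁻¹` for all `ρ > 1` close to `1`, and the geometric series `∑ (1 - y)^k` converges
to an inverse of `y` in `Γ_{an,con}`.
-/

open Filter Topology

lemma tendsto_zpow_atTop_nhds_zero_of_lt_one {a : ℝ} (h₀ : 0 < a) (h₁ : a < 1) :
    Tendsto (fun n : ℤ => a ^ n) atTop (𝓝 0) := by
  refine ((tendsto_rpow_atTop_of_base_lt_one a (by linarith) h₁).comp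
    tendsto_intCast_atTop_atTop).congr fun n => ?_
  simp [Real.rpow_intCast]

lemma tendsto_zpow_atBot_nhds_zero_of_one_lt {a : ℝ} (h : 1 < a) :
    Tendsto (fun n : ℤ => a ^ n) atBot (𝓝 0) := by
  refine ((tendsto_rpow_atBot_of_base_gt_one a h).comp
    (tendsto_intCast_atBot_iff.2 tendsto_id)).congr fun n => ?_
  simp [Real.rpow_intCast]

lemma Real.rpow_mul_intCast_add {b : ℝ} (hb : 0 < b) (c d : ℝ) (n : ℤ) :
    b ^ (c * n + d) = b ^ d * (b ^ c) ^ n := by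
  rw [Real.rpow_add hb, Real.rpow_mul hb.le, Real.rpow_intCast, mul_comm]

lemma exists_least_argmax_of_tendsto_cofinite {φ : ℤ → ℝ} (hφ : Tendsto φ cofinite (𝓝 0))
    {i₁ : ℤ} (hi₁ : 0 < φ i₁) :
    ∃ i₀, 0 < φ i₀ ∧ (∀ i, φ i ≤ φ i₀) ∧ ∀ i < i₀, φ i < φ i₀ := by
  have hfin : {i | φ i₁ ≤ φ i}.Finite := by
    simpa using eventually_cofinite.1 (hφ.eventually (gt_mem_nhds hi₁))
  obtain ⟨b, hb, hbmax⟩ := hfin.toFinset.exists_max_image φ ⟨i₁, by simp⟩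
  have hmax : ∀ i, φ i ≤ φ b := fun i => by
    by_cases hi : φ i₁ ≤ φ i
    · exact hbmax i (by simpa using hi)
    · exact (not_le.1 hi).le.trans (hbmax i₁ (by simp))
  have hb₁ : φ i₁ ≤ φ b := hmax i₁
  obtain ⟨i₀, hi₀, hleast⟩ := Int.exists_least_of_bdd (P := fun i => φ i = φ b)
    ⟨hfin.toFinset.min' ⟨b, hb⟩, fun i hi => hfin.toFinset.min'_le i (by simp [hi, hb₁])⟩
    ⟨b, rfl⟩
  refine ⟨i₀, hi₀ ▸ hi₁.trans_le hb₁, fun i => hi₀ ▸ hmax i, fun i hi => ?_⟩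
  exact lt_of_le_of_ne (hi₀ ▸ hmax i) fun h => absurd (hleast i (h.trans hi₀)) (not_le.2 hi)

lemma zpow_le_zpow_left_of_nonpos₀ {a b : ℝ} (ha : 0 < a) (hab : a ≤ b) {n : ℤ} (hn : n ≤ 0) :
    b ^ n ≤ a ^ n := by
  simpa [inv_zpow'] using zpow_le_zpow_left₀ (neg_nonneg.2 hn)
    (inv_pos.2 (ha.trans_le hab)).le (inv_anti₀ ha hab)

namespace AnSetting

variable {p : ℕ} [Fact p.Prime] (S : AnSetting p)

section Abv

def absv : AbsoluteValue S.F ℝ where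
  toFun := S.abv
  map_mul' := S.abv_mul
  nonneg' := S.abv_nonneg
  eq_zero' := S.abv_eq_zero
  add_le' x y := (S.abv_add_le x y).trans
    (max_le (le_add_of_nonneg_right (S.abv_nonneg y)) (le_add_of_nonneg_left (S.abv_nonneg x)))

lemma isNonarchimedean_absv : IsNonarchimedean S.absv := S.abv_add_le

lemma abv_zero : S.abv 0 = 0 := S.absv.map_zero

lemma abv_one : S.abv 1 = 1 := S.absv.map_one

lemma abv_neg (a : S.F) : S.abv (-a) = S.abv a := S.absv.map_neg a

lemma abv_sub_comm (a b : S.F) : S.abv (a - b) = S.abv (b - a) := S.absv.map_sub a b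

lemma abv_inv (a : S.F) : S.abv a⁻¹ = (S.abv a)⁻¹ := map_inv₀ S.absv a

lemma abv_pos {a : S.F} (ha : a ≠ 0) : 0 < S.abv a := S.absv.pos ha

lemma abv_add_eq_left {a b : S.F} (h : S.abv b < S.abv a) : S.abv (a + b) = S.abv a :=
  S.isNonarchimedean_absv.add_eq_left_of_lt h

lemma abv_le_max_sub (a b : S.F) : S.abv a ≤ max (S.abv (a - b)) (S.abv b) := by
  simpa using S.abv_add_le (a - b) b

lemma abv_sum_le {ι : Type*} {T : Finset ι} {f : ι → S.F} {M : ℝ} (hM : 0 ≤ M)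
    (h : ∀ i ∈ T, S.abv (f i) ≤ M) : S.abv (∑ i ∈ T, f i) ≤ M :=
  Finset.sum_induction f (fun a => S.abv a ≤ M)
    (fun a b ha hb => (S.abv_add_le a b).trans (max_le ha hb)) (S.abv_zero ▸ hM) h

end Abv

section Complete

lemma exists_abv_sub_le_of_cauchy {w : ℕ → S.F} {δ : ℕ → ℝ} (hδ : Tendsto δ atTop (𝓝 0))
    (h : ∀ K K', K ≤ K' → S.abv (w K' - w K) ≤ δ K) :
    ∃ L, ∀ K, S.abv (L - w K) ≤ δ K := by
  have hcauchy : ∀ ε > 0, ∃ N, ∀ a ≥ N, ∀ b ≥ N, S.abv (w a - w b) < ε := by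
    intro ε hε
    obtain ⟨N, hN⟩ := eventually_atTop.1 (hδ.eventually (gt_mem_nhds hε))
    refine ⟨N, fun a ha b hb => ?_⟩
    calc S.abv (w a - w b) ≤ max (S.abv (w a - w N)) (S.abv (w b - w N)) := by
          simpa [S.abv_sub_comm (w N)] using S.abv_add_le (w a - w N) (w N - w b)
      _ ≤ δ N := max_le (h N a ha) (h N b hb)
      _ < ε := hN N le_rfl
  obtain ⟨L, hL⟩ := S.complete w hcauchy
  refine ⟨L, fun K => le_of_not_gt fun hK => ?_⟩
  have hδK : 0 ≤ δ K := by simpa [S.abv_zero] using h K K le_rfl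
  obtain ⟨N, hN⟩ := hL _ (hδK.trans_lt hK)
  have hlt := max_lt ((h K (max N K) (le_max_right _ _)).trans_lt hK)
    ((S.abv_sub_comm _ _).trans_lt (hN (max N K) (le_max_left _ _)))
  have := S.abv_le_max_sub (L - w K) (L - w (max N K))
  rw [sub_sub_sub_cancel_left] at this
  exact lt_irrefl _ (this.trans_lt hlt)

lemma abv_le_of_forall_abv_sub_le {L : S.F} {w : ℕ → S.F} {δ : ℕ → ℝ}
    (hδ : Tendsto δ atTop (𝓝 0)) (hL : ∀ K, S.abv (L - w K) ≤ δ K) {M : ℝ}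
    (hw : ∀ K, S.abv (w K) ≤ M) : S.abv L ≤ M := by
  refine le_of_not_gt fun hM => ?_
  obtain ⟨K, hK⟩ := (hδ.eventually (gt_mem_nhds ((S.abv_nonneg (w 0)).trans_lt
    ((hw 0).trans_lt hM)))).exists
  exact lt_irrefl _ ((S.abv_le_max_sub L (w K)).trans_lt
    (max_lt ((hL K).trans_lt hK) ((hw K).trans_lt hM)))

end Complete

section Discrete

noncomputable def valBase : ℝ := (p : ℝ) ^ ((1 : ℝ) / S.m)

lemma one_lt_valBase : 1 < S.valBase :=
  Real.one_lt_rpow (by exact_mod_cast (Fact.out : p.Prime).one_lt)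
    (by have := S.m_pos; positivity)

lemma exists_abv_eq_valBase_zpow {a : S.F} (ha : a ≠ 0) : ∃ k : ℤ, S.abv a = S.valBase ^ k := by
  obtain ⟨k, hk⟩ := S.abv_discrete a ha
  refine ⟨k, ?_⟩
  rw [hk, valBase, ← Real.rpow_intCast, ← Real.rpow_mul (Nat.cast_nonneg p), one_div_mul_eq_div]

lemma abv_le_inv_valBase_of_abv_lt_one {a : S.F} (h : S.abv a < 1) :
    S.abv a ≤ S.valBase⁻¹ := by
  have hb := S.one_lt_valBase
  rcases eq_or_ne a 0 with rfl | ha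
  · rw [S.abv_zero]; positivity
  obtain ⟨k, hk⟩ := S.exists_abv_eq_valBase_zpow ha
  rw [hk] at h ⊢
  have hk : k < 0 := by
    by_contra! hk
    exact (one_le_zpow₀ hb.le hk).not_gt h
  simpa using zpow_le_zpow_right₀ hb.le (show k ≤ -1 by omega)

lemma exists_forall_abv_le_abv {ι : Type*} {f : ι → S.F} {i₁ : ι} (hi₁ : f i₁ ≠ 0) {C : ℝ}
    (hC : ∀ i, S.abv (f i) ≤ C) : ∃ i₀, ∀ i, S.abv (f i) ≤ S.abv (f i₀) := by
  have hb := S.one_lt_valBase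
  obtain ⟨N, hN⟩ := pow_unbounded_of_one_lt C hb
  obtain ⟨k₁, hk₁⟩ := S.exists_abv_eq_valBase_zpow hi₁
  obtain ⟨k₀, ⟨i₀, hi₀⟩, hk₀⟩ := Int.exists_greatest_of_bdd
    (P := fun k => ∃ i, S.abv (f i) = S.valBase ^ k)
    ⟨N, fun k ⟨i, hi⟩ => by
      have := (hi ▸ hC i).trans_lt (hN.trans_eq (zpow_natCast _ N).symm)
      exact ((zpow_lt_zpow_iff_right₀ hb).1 this).le⟩ ⟨k₁, i₁, hk₁⟩
  refine ⟨i₀, fun i => ?_⟩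
  rcases eq_or_ne (f i) 0 with hi | hi
  · rw [hi, S.abv_zero]; exact S.abv_nonneg _
  obtain ⟨k, hk⟩ := S.exists_abv_eq_valBase_zpow hi
  rw [hk, hi₀]
  exact zpow_le_zpow_right₀ hb.le (hk₀ k ⟨i, hk⟩)

end Discrete

section Coeff

def coeffAddHom (n : ℤ) : S.Γac →+ S.F :=
  AddMonoidHom.mk' (fun x => S.coeff x n) (fun x y => S.coeff_add x y n)

lemma coeff_zero (n : ℤ) : S.coeff 0 n = 0 := map_zero (S.coeffAddHom n)

lemma coeff_sub (x y : S.Γac) (n : ℤ) : S.coeff (x - y) n = S.coeff x n - S.coeff y n :=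
  map_sub (S.coeffAddHom n) x y

lemma coeff_sum {ι : Type*} (T : Finset ι) (f : ι → S.Γac) (n : ℤ) :
    S.coeff (∑ i ∈ T, f i) n = ∑ i ∈ T, S.coeff (f i) n :=
  map_sum (S.coeffAddHom n) f T

instance : Nontrivial S.Γac := by
  refine ⟨1, 0, fun h => ?_⟩
  simpa [S.coeff_one, S.coeff_zero] using congrArg (fun z => S.coeff z 0) h

lemma exists_coeff_ne_zero {x : S.Γac} (hx : x ≠ 0) : ∃ i, S.coeff x i ≠ 0 := by
  by_contra! h
  exact hx (S.coeff_injective (funext fun i => by rw [h i, S.coeff_zero]))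

lemma coeff_mul_eq_sum_of_support {x y : S.Γac} {n : ℤ} (G : Finset ℤ)
    (h : ∀ i ∉ G, S.coeff x i * S.coeff y (n - i) = 0) :
    S.coeff (x * y) n = ∑ i ∈ G, S.coeff x i * S.coeff y (n - i) := by
  by_contra hne
  obtain ⟨T, hT⟩ := S.coeff_mul x y n _ (S.abv_pos (sub_ne_zero.2 hne))
  have hsum : ∑ i ∈ T ∪ G, S.coeff x i * S.coeff y (n - i)
      = ∑ i ∈ G, S.coeff x i * S.coeff y (n - i) :=
    (Finset.sum_subset Finset.subset_union_right fun i _ hi => h i hi).symm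
  exact lt_irrefl _ (hsum ▸ hT (T ∪ G) Finset.subset_union_left)

lemma abv_coeff_mul_le {x y : S.Γac} {n : ℤ} {M : ℝ} (hM : 0 ≤ M)
    (h : ∀ i, S.abv (S.coeff x i) * S.abv (S.coeff y (n - i)) ≤ M) :
    S.abv (S.coeff (x * y) n) ≤ M := by
  refine le_of_not_gt fun hlt => ?_
  obtain ⟨T, hT⟩ := S.coeff_mul x y n _ (hM.trans_lt hlt)
  have hsum : S.abv (∑ i ∈ T, S.coeff x i * S.coeff y (n - i)) ≤ M :=
    S.abv_sum_le hM fun i _ => (S.abv_mul _ _).trans_le (h i)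
  exact lt_irrefl _ ((S.abv_le_max_sub _ _).trans_lt (max_lt (hT T subset_rfl) (hsum.trans_lt hlt)))

lemma abv_coeff_mul_eq_of_dominant {x y : S.Γac} {n i₀ : ℤ}
    (h : ∀ i ≠ i₀, S.abv (S.coeff x i * S.coeff y (n - i))
      < S.abv (S.coeff x i₀ * S.coeff y (n - i₀))) :
    S.abv (S.coeff (x * y) n) = S.abv (S.coeff x i₀ * S.coeff y (n - i₀)) := by
  have hpos : 0 < S.abv (S.coeff x i₀ * S.coeff y (n - i₀)) :=
    (S.abv_nonneg _).trans_lt (h (i₀ + 1) (by omega))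
  obtain ⟨T, hT⟩ := S.coeff_mul x y n _ hpos
  have hsum : S.abv (∑ i ∈ T ∪ {i₀}, S.coeff x i * S.coeff y (n - i))
      = S.abv (S.coeff x i₀ * S.coeff y (n - i₀)) :=
    S.isNonarchimedean_absv.apply_sum_eq_of_lt (fun a => (S.abv_neg a).symm) (by simp)
      fun i _ hi => h i hi
  rw [← hsum, ← sub_add_cancel (S.coeff (x * y) n), add_comm]
  exact S.abv_add_eq_left (hsum ▸ hT _ Finset.subset_union_left)

lemma coeff_const_mul (a : S.F) (x : S.Γac) (n : ℤ) :
    S.coeff (S.const a * x) n = a * S.coeff x n := by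
  rw [S.coeff_mul_eq_sum_of_support {0} fun i hi => by
    rw [S.coeff_const, if_neg (by simpa using hi), zero_mul]]
  simp [S.coeff_const]

lemma coeff_t_mul (x : S.Γac) (n : ℤ) : S.coeff (S.t * x) n = S.coeff x (n - 1) := by
  rw [S.coeff_mul_eq_sum_of_support {1} fun i hi => by
    rw [S.coeff_t, if_neg (by simpa using hi), zero_mul]]
  simp [S.coeff_t]

lemma exists_coeff_eq_of_forall_abv_le_zpow {f : ℤ → S.F} {ρ₀ C : ℝ} (hρ₀ : 1 < ρ₀)
    (hf : ∀ ρ ∈ Set.Ioc 1 ρ₀, ∀ n, S.abv (f n) ≤ C * ρ ^ n) : ∃ z, S.coeff z = f := by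
  have hp : (1 : ℝ) < p := by exact_mod_cast (Fact.out : p.Prime).one_lt
  refine S.coeff_surjective f (fun ε hε => ?_) ?_
  · set ρ := min ρ₀ (1 + ε / 2)
    have hρ : 1 < ρ := lt_min hρ₀ (by linarith)
    have ha : 1 < (1 + ε) / ρ :=
      (one_lt_div (by linarith)).2 ((min_le_right _ _).trans_lt (by linarith))
    obtain ⟨N, hN⟩ := pow_unbounded_of_one_lt C ha
    refine ⟨N, by positivity, fun n hn => ?_⟩
    calc S.abv (f n) ≤ C * ρ ^ n := hf ρ ⟨hρ, min_le_left _ _⟩ n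
      _ ≤ ((1 + ε) / ρ) ^ n * ρ ^ n := by
          gcongr
          exact hN.le.trans ((zpow_natCast _ N).symm.trans_le (zpow_le_zpow_right₀ ha.le hn))
      _ = (1 + ε) ^ n := by rw [div_zpow, div_mul_cancel₀ _ (by positivity)]
  · obtain ⟨N, hN⟩ := pow_unbounded_of_one_lt C hp
    refine ⟨Real.logb p ρ₀, N + 1, Real.logb_pos hp hρ₀, by positivity, fun n _ => ?_⟩
    rw [Real.rpow_mul_intCast_add (by positivity),
      Real.rpow_logb (by positivity) hp.ne' (by positivity)]
    calc S.abv (f n) ≤ C * ρ₀ ^ n := hf ρ₀ ⟨hρ₀, le_rfl⟩ n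
      _ ≤ (p : ℝ) ^ ((N : ℝ) + 1) * ρ₀ ^ n := by
          gcongr
          rw [← Real.rpow_natCast] at hN
          exact hN.le.trans (Real.rpow_le_rpow_of_exponent_le hp.le (by linarith))

lemma isUnit_t : IsUnit S.t := by
  obtain ⟨u, hu⟩ := S.exists_coeff_eq_of_forall_abv_le_zpow
    (f := fun n => if n = -1 then 1 else 0) (C := 2) one_lt_two fun ρ hρ n => by
      have hρ₀ : 0 < ρ := zero_lt_one.trans hρ.1
      split_ifs with h
      · rw [h, S.abv_one, zpow_neg_one, ← div_eq_mul_inv, le_div_iff₀ hρ₀]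
        linarith [hρ.2]
      · rw [S.abv_zero]; positivity
  refine IsUnit.of_mul_eq_one u (S.coeff_injective (funext fun n => ?_))
  rw [S.coeff_t_mul, hu, S.coeff_one]
  exact if_congr (by omega) rfl rfl

noncomputable def tUnit : S.Γacˣ := S.isUnit_t.unit

lemma coeff_tUnit_zpow_mul (k : ℤ) (x : S.Γac) (n : ℤ) :
    S.coeff (↑(S.tUnit ^ k) * x) n = S.coeff x (n - k) := by
  have ht : (S.tUnit : S.Γac) = S.t := S.isUnit_t.unit_spec
  induction k using Int.induction_on generalizing n with
  | zero => simp
  | succ k ih =>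
    rw [zpow_add_one, Units.val_mul, ht, mul_comm _ S.t, mul_assoc, S.coeff_t_mul, ih]
    ring_nf
  | pred k ih =>
    have h := ih (n + 1)
    rw [← sub_add_cancel (-(k : ℤ)) 1, zpow_add_one, Units.val_mul, ht, mul_comm _ S.t, mul_assoc,
      S.coeff_t_mul, add_sub_cancel_right] at h
    rw [h]
    ring_nf

end Coeff

section GaussNorm

/-- The Gauss norm `|z|_ρ = sup_n |z_n| ρ^(-n)` of `z` is at most `A`. -/
def GaussNormLE (ρ : ℝ) (z : S.Γac) (A : ℝ) : Prop :=
  ∀ n : ℤ, S.abv (S.coeff z n) ≤ A * ρ ^ n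

variable {S} {ρ A B : ℝ} {x y : S.Γac}

lemma GaussNormLE.nonneg (h : S.GaussNormLE ρ x A) : 0 ≤ A := by
  simpa using (S.abv_nonneg _).trans (h 0)

lemma GaussNormLE.mono (h : S.GaussNormLE ρ x A) (hAB : A ≤ B) (hρ : 0 < ρ) :
    S.GaussNormLE ρ x B :=
  fun n => (h n).trans (by gcongr)

lemma gaussNormLE_one (hρ : 0 < ρ) : S.GaussNormLE ρ 1 1 := fun n => by
  rw [S.coeff_one]
  split_ifs with h
  · simp [h, S.abv_one]
  · rw [S.abv_zero]; positivity

lemma GaussNormLE.sub (hx : S.GaussNormLE ρ x A) (hy : S.GaussNormLE ρ y A) :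
    S.GaussNormLE ρ (x - y) A := fun n => by
  rw [S.coeff_sub, sub_eq_add_neg]
  exact (S.abv_add_le _ _).trans (max_le (hx n) ((S.abv_neg _).trans_le (hy n)))

lemma gaussNormLE_sum {ι : Type*} {T : Finset ι} {f : ι → S.Γac} (hA : 0 ≤ A) (hρ : 0 < ρ)
    (h : ∀ i ∈ T, S.GaussNormLE ρ (f i) A) : S.GaussNormLE ρ (∑ i ∈ T, f i) A := fun n => by
  rw [S.coeff_sum]
  exact S.abv_sum_le (by positivity) fun i hi => h i hi n

lemma GaussNormLE.mul (hρ : 0 < ρ) (hx : S.GaussNormLE ρ x A) (hy : S.GaussNormLE ρ y B) :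
    S.GaussNormLE ρ (x * y) (A * B) := fun n =>
  S.abv_coeff_mul_le (by have := hx.nonneg; have := hy.nonneg; positivity) fun i =>
    calc _ ≤ (A * ρ ^ i) * (B * ρ ^ (n - i)) :=
          mul_le_mul (hx i) (hy _) (S.abv_nonneg _) ((S.abv_nonneg _).trans (hx i))
      _ = A * B * ρ ^ n := by rw [mul_mul_mul_comm, ← zpow_add₀ hρ.ne', add_sub_cancel]

lemma GaussNormLE.pow (hρ : 0 < ρ) (h : S.GaussNormLE ρ x A) (k : ℕ) :
    S.GaussNormLE ρ (x ^ k) (A ^ k) := by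
  induction k with
  | zero => simpa using gaussNormLE_one hρ
  | succ k ih => rw [pow_succ, pow_succ]; exact ih.mul hρ h

lemma eq_zero_of_forall_gaussNormLE (hρ : 0 < ρ) (h : ∀ ε > 0, S.GaussNormLE ρ x ε) :
    x = 0 := by
  refine S.coeff_injective (funext fun n => ?_)
  rw [S.coeff_zero, ← S.abv_eq_zero]
  refine le_antisymm (le_of_forall_pos_le_add fun ε hε => ?_) (S.abv_nonneg _)
  have := h (ε / ρ ^ n) (by positivity) n
  rw [div_mul_cancel₀ _ (by positivity)] at this
  linarith

variable (S) in
lemma exists_gaussNormLE_sub_of_cauchy {w : ℕ → S.Γac} {δ : ℕ → ℝ} {ρ₀ C : ℝ} (hρ₀ : 1 < ρ₀)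
    (hδ : Tendsto δ atTop (𝓝 0))
    (hcauchy : ∀ K K', K ≤ K' → S.GaussNormLE ρ₀ (w K' - w K) (δ K))
    (hw : ∀ ρ ∈ Set.Ioc 1 ρ₀, ∀ K, S.GaussNormLE ρ (w K) C) :
    ∃ H, ∀ K, S.GaussNormLE ρ₀ (H - w K) (δ K) := by
  have hδn : ∀ n : ℤ, Tendsto (fun K => δ K * ρ₀ ^ n) atTop (𝓝 0) := fun n => by
    simpa using hδ.mul_const (ρ₀ ^ n)
  choose h hh using fun n => S.exists_abv_sub_le_of_cauchy (w := fun K => S.coeff (w K) n)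
    (hδn n) fun K K' hK => by simpa [S.coeff_sub] using hcauchy K K' hK n
  obtain ⟨H, hH⟩ := S.exists_coeff_eq_of_forall_abv_le_zpow (f := h) hρ₀ fun ρ hρ n =>
    S.abv_le_of_forall_abv_sub_le (hδn n) (hh n) fun K => hw ρ hρ K n
  exact ⟨H, fun K n => by rw [S.coeff_sub, hH]; exact hh n K⟩

variable (S) in
/-- The inverse is the coefficientwise limit of the geometric series `∑ Zᵏ`; the bounds for
all `ρ` close to `1`, not just for `ρ₀`, give the limit the growth condition at `+∞`. -/
theorem isUnit_one_sub_of_gaussNormLE {Z : S.Γac} {ρ₀ : ℝ} (hρ₀ : 1 < ρ₀)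
    (hZ : ∀ ρ ∈ Set.Ioc 1 ρ₀, S.GaussNormLE ρ Z ρ⁻¹) : IsUnit (1 - Z) := by
  have hpos : ∀ ρ ∈ Set.Ioc 1 ρ₀, 0 < ρ := fun ρ hρ => zero_lt_one.trans hρ.1
  have hinv : ∀ ρ ∈ Set.Ioc 1 ρ₀, ρ⁻¹ ≤ 1 := fun ρ hρ => inv_le_one_of_one_le₀ hρ.1.le
  have hZpow : ∀ ρ ∈ Set.Ioc 1 ρ₀, ∀ k, S.GaussNormLE ρ (Z ^ k) (ρ⁻¹ ^ k) :=
    fun ρ hρ k => (hZ ρ hρ).pow (hpos ρ hρ) k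
  set w : ℕ → S.Γac := fun K => ∑ k ∈ Finset.range K, Z ^ k
  have hw : ∀ ρ ∈ Set.Ioc 1 ρ₀, ∀ K, S.GaussNormLE ρ (w K) 1 := fun ρ hρ K =>
    have := hpos ρ hρ
    gaussNormLE_sum zero_le_one this fun k _ =>
      (hZpow ρ hρ k).mono (pow_le_one₀ (by positivity) (hinv ρ hρ)) this
  have h₀ : ρ₀ ∈ Set.Ioc 1 ρ₀ := ⟨hρ₀, le_rfl⟩
  have hρ₀pos := hpos ρ₀ h₀
  have hρ₀inv : ρ₀⁻¹ < 1 := inv_lt_one_of_one_lt₀ hρ₀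
  have hcauchy : ∀ K K', K ≤ K' → S.GaussNormLE ρ₀ (w K' - w K) (ρ₀⁻¹ ^ K) := fun K K' hK => by
    rw [← Finset.sum_Ico_eq_sub _ hK]
    exact gaussNormLE_sum (by positivity) hρ₀pos fun k hk => (hZpow ρ₀ h₀ k).mono
      (pow_le_pow_of_le_one (by positivity) hρ₀inv.le (Finset.mem_Ico.1 hk).1) hρ₀pos
  obtain ⟨H, hH⟩ := S.exists_gaussNormLE_sub_of_cauchy hρ₀
    (tendsto_pow_atTop_nhds_zero_of_lt_one (by positivity) hρ₀inv) hcauchy hw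
  refine IsUnit.of_mul_eq_one H (sub_eq_zero.1
    (eq_zero_of_forall_gaussNormLE hρ₀pos fun ε hε => ?_))
  obtain ⟨K, hK⟩ := exists_pow_lt_of_lt_one hε hρ₀inv
  have hgeom : (1 - Z) * H - 1 = (1 - Z) * (H - w K) - Z ^ K := by
    rw [mul_sub (1 - Z) H, mul_neg_geom_sum]
    ring
  have h1Z : S.GaussNormLE ρ₀ (1 - Z) 1 :=
    (gaussNormLE_one hρ₀pos).sub ((hZ ρ₀ h₀).mono hρ₀inv.le hρ₀pos)
  rw [hgeom]
  exact ((one_mul (ρ₀⁻¹ ^ K) ▸ h1Z.mul hρ₀pos (hH K)).sub (hZpow ρ₀ h₀ K)).mono hK.le hρ₀pos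

end GaussNorm

section Units

lemma tendsto_abv_coeff_div_zpow_atTop (z : S.Γac) {ρ : ℝ} (hρ : 1 < ρ) :
    Tendsto (fun n => S.abv (S.coeff z n) / ρ ^ n) atTop (𝓝 0) := by
  set σ := (1 + ρ) / 2 with hσ
  obtain ⟨N, -, hN⟩ := S.coeff_growth z (σ - 1) (by linarith)
  refine squeeze_zero' (Eventually.of_forall fun n =>
    div_nonneg (S.abv_nonneg _) (by positivity)) ?_ (tendsto_zpow_atTop_nhds_zero_of_lt_one
      (by positivity : 0 < σ / ρ) ((div_lt_one (by linarith)).2 (by linarith)))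
  filter_upwards [eventually_ge_atTop N] with n hn
  rw [div_zpow]
  gcongr
  simpa using hN n hn

lemma exists_tendsto_abv_coeff_div_zpow_atBot (z : S.Γac) :
    ∃ ρ₁ > 1, ∀ ρ ∈ Set.Ioo 0 ρ₁,
      Tendsto (fun n => S.abv (S.coeff z n) / ρ ^ n) atBot (𝓝 0) := by
  obtain ⟨c, d, hc, -, hdec⟩ := S.coeff_decay z
  have hp : (1 : ℝ) < p := by exact_mod_cast (Fact.out : p.Prime).one_lt
  refine ⟨p ^ c, Real.one_lt_rpow hp hc, fun ρ hρ => ?_⟩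
  refine squeeze_zero' (Eventually.of_forall fun n =>
    div_nonneg (S.abv_nonneg _) (by have := hρ.1; positivity)) ?_
    (by simpa using (tendsto_zpow_atBot_nhds_zero_of_one_lt
      ((one_lt_div hρ.1).2 hρ.2)).const_mul ((p : ℝ) ^ d))
  filter_upwards [eventually_lt_atBot 0] with n hn
  rw [div_zpow, ← mul_div_assoc, ← Real.rpow_mul_intCast_add (by positivity)]
  have := hρ.1
  gcongr
  exact hdec n hn

/-- At the least maximizing indices of the two weighted coefficient sequences, the coefficient
of `x * y` has a single dominant term. -/
lemma abv_coeff_div_zpow_mul_le_one_of_mul_eq_one {x y : S.Γac} (hxy : x * y = 1) {ρ : ℝ}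
    (hρ : 0 < ρ)
    (hx : Tendsto (fun n => S.abv (S.coeff x n) / ρ ^ n) cofinite (𝓝 0))
    (hy : Tendsto (fun n => S.abv (S.coeff y n) / ρ ^ n) cofinite (𝓝 0)) (i j : ℤ) :
    S.abv (S.coeff x i) / ρ ^ i * (S.abv (S.coeff y j) / ρ ^ j) ≤ 1 := by
  set φ := fun n => S.abv (S.coeff x n) / ρ ^ n
  set ψ := fun n => S.abv (S.coeff y n) / ρ ^ n
  have hφ : ∀ n, 0 ≤ φ n := fun n => div_nonneg (S.abv_nonneg _) (by positivity)
  have hψ : ∀ n, 0 ≤ ψ n := fun n => div_nonneg (S.abv_nonneg _) (by positivity)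
  obtain ⟨i₁, hi₁⟩ := S.exists_coeff_ne_zero (left_ne_zero_of_mul_eq_one hxy)
  obtain ⟨j₁, hj₁⟩ := S.exists_coeff_ne_zero (right_ne_zero_of_mul_eq_one hxy)
  obtain ⟨i₀, hφpos, hφmax, hφleast⟩ := exists_least_argmax_of_tendsto_cofinite hx
    (i₁ := i₁) (div_pos (S.abv_pos hi₁) (by positivity))
  obtain ⟨j₀, hψpos, hψmax, hψleast⟩ := exists_least_argmax_of_tendsto_cofinite hy
    (i₁ := j₁) (div_pos (S.abv_pos hj₁) (by positivity))
  have habv : ∀ i j, S.abv (S.coeff x i * S.coeff y j) = φ i * ψ j * ρ ^ (i + j) := by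
    intro i j
    simp only [φ, ψ]
    rw [S.abv_mul, zpow_add₀ hρ.ne']
    field_simp
  have hdom : ∀ i ≠ i₀, S.abv (S.coeff x i * S.coeff y (i₀ + j₀ - i))
      < S.abv (S.coeff x i₀ * S.coeff y (i₀ + j₀ - i₀)) := by
    intro i hi
    rw [habv, habv, add_sub_cancel, add_sub_cancel_left]
    gcongr ?_ * _
    rcases hi.lt_or_gt with hlt | hgt
    · calc φ i * ψ (i₀ + j₀ - i) ≤ φ i * ψ j₀ := mul_le_mul_of_nonneg_left (hψmax _) (hφ i)
        _ < φ i₀ * ψ j₀ := mul_lt_mul_of_pos_right (hφleast i hlt) hψpos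
    · calc φ i * ψ (i₀ + j₀ - i) ≤ φ i₀ * ψ (i₀ + j₀ - i) :=
            mul_le_mul_of_nonneg_right (hφmax i) (hψ _)
        _ < φ i₀ * ψ j₀ := mul_lt_mul_of_pos_left (hψleast _ (by omega)) hφpos
  have h := S.abv_coeff_mul_eq_of_dominant hdom
  rw [hxy, S.coeff_one, add_sub_cancel_left, habv] at h
  have hsum : i₀ + j₀ = 0 := by
    by_contra hne
    rw [if_neg hne, S.abv_zero] at h
    exact (mul_pos (mul_pos hφpos hψpos) (zpow_pos hρ _)).ne h
  rw [if_pos hsum, S.abv_one, hsum, zpow_zero, mul_one] at h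
  exact h ▸ mul_le_mul (hφmax i) (hψmax j) (hψ j) hφpos.le

lemma coeff_bounded_of_isUnit {x : S.Γac} (hu : IsUnit x) :
    ∃ C : ℝ, ∀ i : ℤ, S.abv (S.coeff x i) ≤ C := by
  obtain ⟨y, hxy⟩ := hu.exists_right_inv
  obtain ⟨j, hj⟩ := S.exists_coeff_ne_zero (right_ne_zero_of_mul_eq_one hxy)
  obtain ⟨ρx, hρx, hx⟩ := S.exists_tendsto_abv_coeff_div_zpow_atBot x
  obtain ⟨ρy, hρy, hy⟩ := S.exists_tendsto_abv_coeff_div_zpow_atBot y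
  refine ⟨(S.abv (S.coeff y j))⁻¹, fun i => ?_⟩
  have hlim : Tendsto (fun ρ : ℝ => (S.abv (S.coeff y j))⁻¹ * ρ ^ (i + j)) (𝓝[>] 1)
      (𝓝 (S.abv (S.coeff y j))⁻¹) := by
    simpa using (((continuousAt_zpow₀ (1 : ℝ) (i + j) (Or.inl one_ne_zero)).tendsto.const_mul
      (S.abv (S.coeff y j))⁻¹).mono_left nhdsWithin_le_nhds)
  refine ge_of_tendsto hlim ?_
  filter_upwards [Ioo_mem_nhdsGT (lt_min hρx hρy)] with ρ hρ
  have hρ₀ : 0 < ρ := zero_lt_one.trans hρ.1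
  have key := S.abv_coeff_div_zpow_mul_le_one_of_mul_eq_one hxy hρ₀
    (Int.cofinite_eq ▸ (hx ρ ⟨hρ₀, hρ.2.trans_le (min_le_left _ _)⟩).sup
      (S.tendsto_abv_coeff_div_zpow_atTop x hρ.1))
    (Int.cofinite_eq ▸ (hy ρ ⟨hρ₀, hρ.2.trans_le (min_le_right _ _)⟩).sup
      (S.tendsto_abv_coeff_div_zpow_atTop y hρ.1)) i j
  rw [div_mul_div_comm, div_le_one (by positivity), ← zpow_add₀ hρ₀.ne'] at key
  rwa [inv_mul_eq_div, le_div_iff₀ (S.abv_pos hj)]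

lemma exists_abv_coeff_le_zpow_sub_one {y : S.Γac} (hlt : ∀ n < 0, S.abv (S.coeff y n) < 1) :
    ∃ ρ₀ > 1, ∀ n < 0, S.abv (S.coeff y n) ≤ ρ₀ ^ (n - 1) := by
  obtain ⟨ρ₁, hρ₁, hy⟩ := S.exists_tendsto_abv_coeff_div_zpow_atBot y
  set ρ' := (1 + ρ₁) / 2 with hρ'
  obtain ⟨N, hN⟩ := eventually_atBot.1
    ((hy ρ' ⟨by linarith, by linarith⟩).eventually (gt_mem_nhds one_pos))
  have hsq : Tendsto (fun ρ : ℝ => ρ ^ 2) (𝓝[>] 1) (𝓝 1) := by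
    simpa using ((continuous_pow 2).tendsto (1 : ℝ)).mono_left nhdsWithin_le_nhds
  have hzpow : Tendsto (fun ρ : ℝ => ρ ^ N) (𝓝[>] 1) (𝓝 1) := by
    simpa using ((continuousAt_zpow₀ (1 : ℝ) N (Or.inl one_ne_zero)).tendsto).mono_left
      nhdsWithin_le_nhds
  obtain ⟨ρ, hρ : 1 < ρ, hρsq, hρN⟩ := (eventually_mem_nhdsWithin.and
    ((hsq.eventually_lt_const (by linarith : (1 : ℝ) < ρ')).and
      (hzpow.eventually_const_lt (inv_lt_one_of_one_lt₀ S.one_lt_valBase)))).exists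
  refine ⟨ρ, hρ, fun n hn => ?_⟩
  -- decay below `N`, discreteness on the finitely many remaining negative indices
  rcases le_or_gt n N with hnN | hnN
  · calc S.abv (S.coeff y n) ≤ ρ' ^ n :=
          ((div_lt_one (zpow_pos (by linarith) n)).1 (hN n hnN)).le
      _ ≤ (ρ ^ 2) ^ n := zpow_le_zpow_left_of_nonpos₀ (by positivity) hρsq.le hn.le
      _ = ρ ^ (2 * n) := by rw [← zpow_natCast, ← zpow_mul]; rfl
      _ ≤ ρ ^ (n - 1) := zpow_le_zpow_right₀ hρ.le (by omega)
  · calc S.abv (S.coeff y n) ≤ S.valBase⁻¹ := S.abv_le_inv_valBase_of_abv_lt_one (hlt n hn)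
      _ ≤ ρ ^ N := hρN.le
      _ ≤ ρ ^ (n - 1) := zpow_le_zpow_right₀ hρ.le (by omega)

lemma isUnit_of_normalized {y : S.Γac} (h0 : S.coeff y 0 = 1)
    (hle : ∀ n, S.abv (S.coeff y n) ≤ 1) (hlt : ∀ n < 0, S.abv (S.coeff y n) < 1) :
    IsUnit y := by
  obtain ⟨ρ₀, hρ₀, hy⟩ := S.exists_abv_coeff_le_zpow_sub_one hlt
  rw [← sub_sub_cancel 1 y]
  refine S.isUnit_one_sub_of_gaussNormLE hρ₀ fun ρ hρ n => ?_
  have hρpos : 0 < ρ := zero_lt_one.trans hρ.1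
  rw [← zpow_neg_one, ← zpow_add₀ hρpos.ne', neg_add_eq_sub, S.coeff_sub, S.coeff_one]
  rcases lt_trichotomy n 0 with hn | rfl | hn
  · rw [if_neg hn.ne, zero_sub, S.abv_neg]
    exact (hy n hn).trans (zpow_le_zpow_left_of_nonpos₀ hρpos hρ.2 (by omega))
  · rw [if_pos rfl, h0, sub_self, S.abv_zero]
    positivity
  · rw [if_neg hn.ne', zero_sub, S.abv_neg]
    exact (hle n).trans (one_le_zpow₀ hρ.1.le (by omega))

lemma exists_least_index_abv_coeff_max {x : S.Γac} (hx : x ≠ 0) {C : ℝ}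
    (hC : ∀ i, S.abv (S.coeff x i) ≤ C) :
    ∃ i₀, S.coeff x i₀ ≠ 0 ∧ (∀ n, S.abv (S.coeff x n) ≤ S.abv (S.coeff x i₀)) ∧
      ∀ n < i₀, S.abv (S.coeff x n) < S.abv (S.coeff x i₀) := by
  obtain ⟨i₁, hi₁⟩ := S.exists_coeff_ne_zero hx
  obtain ⟨i₂, hmax⟩ := S.exists_forall_abv_le_abv hi₁ hC
  have hpos : 0 < S.abv (S.coeff x i₂) := (S.abv_pos hi₁).trans_le (hmax i₁)
  obtain ⟨ρ₁, hρ₁, hbot⟩ := S.exists_tendsto_abv_coeff_div_zpow_atBot x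
  obtain ⟨N, hN⟩ := eventually_atBot.1 ((hbot 1 ⟨one_pos, hρ₁⟩).eventually (gt_mem_nhds hpos))
  obtain ⟨i₀, hi₀, hleast⟩ := Int.exists_least_of_bdd
    (P := fun i => S.abv (S.coeff x i) = S.abv (S.coeff x i₂))
    ⟨N, fun i hi => le_of_not_gt fun h =>
      lt_irrefl (S.abv (S.coeff x i₂)) (by simpa [hi] using hN i h.le)⟩
    ⟨i₂, rfl⟩
  refine ⟨i₀, fun h => hpos.ne' (by rw [← hi₀, h, S.abv_zero]), fun n => hi₀ ▸ hmax n,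
    fun n hn => lt_of_le_of_ne (hi₀ ▸ hmax n) fun h => (hleast n (h.trans hi₀)).not_gt hn⟩

lemma isUnit_of_coeff_bounded {x : S.Γac} (hx : x ≠ 0) {C : ℝ}
    (hC : ∀ i, S.abv (S.coeff x i) ≤ C) : IsUnit x := by
  obtain ⟨i₀, hx₀, hmax, hleast⟩ := S.exists_least_index_abv_coeff_max hx hC
  set W := S.const (S.coeff x i₀)⁻¹ * ↑(S.tUnit ^ (-i₀))
  have hcoeff : ∀ n, S.coeff (W * x) n = (S.coeff x i₀)⁻¹ * S.coeff x (n + i₀) := fun n => by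
    rw [mul_assoc, S.coeff_const_mul, S.coeff_tUnit_zpow_mul, sub_neg_eq_add]
  have habv : ∀ n, S.abv (S.coeff (W * x) n) = S.abv (S.coeff x (n + i₀)) / S.abv (S.coeff x i₀) :=
    fun n => by rw [hcoeff, S.abv_mul, S.abv_inv, inv_mul_eq_div]
  have hpos := S.abv_pos hx₀
  refine isUnit_of_mul_isUnit_right (x := W)
    (S.isUnit_of_normalized ?_ (fun n => ?_) fun n hn => ?_)
  · rw [hcoeff, zero_add, inv_mul_cancel₀ hx₀]
  · rw [habv, div_le_one hpos]
    exact hmax _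
  · rw [habv, div_lt_one hpos]
    exact hleast _ (by omega)

end Units

end AnSetting

/-- For `x = ∑ᵢ cᵢ tⁱ` a nonzero element of `Γ_{an,con}`, `x` is a unit
in `Γ_{an,con}` if and only if the set `{|cᵢ| : i ∈ ℤ}` is bounded above. -/
theorem isUnit_iff_coeff_bounded {p : ℕ} [Fact p.Prime] (S : AnSetting p)
    (x : S.Γac) (hx : x ≠ 0) :
    IsUnit x ↔ ∃ C : ℝ, ∀ i : ℤ, S.abv (S.coeff x i) ≤ C :=
  ⟨S.coeff_bounded_of_isUnit, fun ⟨_, hC⟩ => S.isUnit_of_coeff_bounded hx hC⟩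
end

section
/- Let τ : K^imm → Γ^imm denote the Teichmüller map, ν the valuation on K^imm normalized so that a uniformizer of K = k((t)) has valuation 1, and m the integer with |π| = p^{-1/m}. If x = Σ_{a=0}^∞ π^a τ(d_a) with d_a ∈ K^imm, then for every n ≥ 1, the smallest rational number j such that the coefficient c_j of u^j in the expansion x = Σ_{i∈ℚ} c_i u^i satisfies |c_j| > p^{-n/m} (equivalently, c_j ≢ 0 mod π^n) equals min{ν(d_0), …, ν(d_{n−1})}. -/
open scoped Classical

/-- The setting for `Γ^imm`.  `O` is a complete discrete valuation ring, finite and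
totally ramified over the Witt vectors of an algebraically closed field `k` of
characteristic `p` (with residue map `redO : O → k`); `K^imm` is the field of generalized
power series over `k` with exponents in `ℚ` and well-ordered support (`HahnSeries ℚ k`);
`Γ^imm = W(K^imm) ⊗_W O` is encoded as the ring of generalized series `∑_{i ∈ ℚ} cᵢ uⁱ`
(`cᵢ ∈ O`) such that for each `ε > 0` the set `{i | |cᵢ| ≥ p^{-ε}}` is well-ordered, via
its coefficient functionals; `τ` is the Teichmüller map, the unique multiplicative lift
admitting `p^n`-th roots for all `n`. -/
structure ImmSetting (p : ℕ) [Fact p.Prime] where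
  k : Type
  [fieldk : Field k]
  [algk : IsAlgClosed k]
  [chark : CharP k p]
  O : Type
  [commO : CommRing O]
  [domO : IsDomain O]
  [dvrO : IsDiscreteValuationRing O]
  abv : O → ℝ
  abv_nonneg : ∀ x, 0 ≤ abv x
  abv_eq_zero : ∀ x, abv x = 0 ↔ x = 0
  abv_mul : ∀ x y, abv (x * y) = abv x * abv y
  abv_add_le : ∀ x y, abv (x + y) ≤ max (abv x) (abv y)
  abv_le_one : ∀ x, abv x ≤ 1
  abv_p : abv (p : O) = (p : ℝ)⁻¹
  m : ℕ
  m_pos : 0 < m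
  abv_discrete : ∀ x : O, x ≠ 0 → ∃ n : ℕ, abv x = (p : ℝ) ^ (-(n : ℝ) / (m : ℝ))
  complete : ∀ f : ℕ → O,
    (∀ ε : ℝ, 0 < ε → ∃ N, ∀ a ≥ N, ∀ b ≥ N, abv (f a - f b) < ε) →
    ∃ x : O, ∀ ε : ℝ, 0 < ε → ∃ N, ∀ a ≥ N, abv (f a - x) < ε
  redO : O →+* k
  redO_surjective : Function.Surjective redO
  redO_ker : ∀ x : O, redO x = 0 ↔ abv x < 1
  Γimm : Type
  [commI : CommRing Γimm]
  coeff : Γimm → ℚ → O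
  coeff_injective : Function.Injective coeff
  coeff_add : ∀ x y i, coeff (x + y) i = coeff x i + coeff y i
  coeff_support : ∀ (x : Γimm) (ε : ℝ), 0 < ε →
    {i : ℚ | (p : ℝ) ^ (-ε) ≤ abv (coeff x i)}.IsWF
  coeff_surjective : ∀ f : ℚ → O,
    (∀ ε : ℝ, 0 < ε → {i : ℚ | (p : ℝ) ^ (-ε) ≤ abv (f i)}.IsWF) → ∃ x, coeff x = f
  coeff_one : ∀ i, coeff 1 i = if i = 0 then 1 else 0
  const : O →+* Γimm
  coeff_const : ∀ a i, coeff (const a) i = if i = 0 then a else 0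
  coeff_mul : ∀ (x y : Γimm) (n : ℚ) (ε : ℝ), 0 < ε →
    ∃ T₀ : Finset ℚ, ∀ T : Finset ℚ, T₀ ⊆ T →
      abv (coeff (x * y) n - ∑ i ∈ T, coeff x i * coeff y (n - i)) < ε
  τ : HahnSeries ℚ k → Γimm
  τ_mul : ∀ a b, τ (a * b) = τ a * τ b
  τ_red : ∀ a i, redO (coeff (τ a) i) = a.coeff i
  τ_roots : ∀ (a : HahnSeries ℚ k) (n : ℕ), ∃ y : Γimm, y ^ (p ^ n) = τ a

attribute [instance] ImmSetting.fieldk ImmSetting.algk ImmSetting.chark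
  ImmSetting.commO ImmSetting.domO ImmSetting.dvrO ImmSetting.commI

/-!
Modulo `π ^ n`, the coefficient of `u ^ j` in `x` is `∑_{a < n} π ^ a c_{a,j}`, where `c_{a,j}`
is the coefficient of `u ^ j` in `τ (d a)`. Since `τ` lifts the coefficients of `d a`,
`c_{a,j}` is a unit at `j = ν (d a)`. Below `ν (d a)` it is divisible by every power of `π`:
write `τ d = y ^ p ^ N`; the reduction of `y` vanishes below `ν d / p ^ N`, so `y` is congruent
mod `π` to a series `y₀` supported in `[ν d / p ^ N, ∞)`, and raising to the power `p ^ N`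
upgrades this to a congruence mod `π ^ (N + 1)` with `y₀ ^ p ^ N`, which is supported in
`[ν d, ∞)`. Hence the first `j` at which the sum is nonzero mod `π ^ n` is the least `ν (d a)`,
since at that `j` the sum is `≡ π ^ a₀ c_{a₀,j} ≢ 0` mod `π ^ (a₀ + 1)` for the least index `a₀`
attaining the minimum.
-/

theorem dvd_sub_pow_of_dvd_sub_of_dvd_natCast {R : Type*} [CommRing R] {p : ℕ} {π a b : R}
    (hp : π ∣ (p : R)) (h : π ∣ a - b) (k : ℕ) : π ^ (k + 1) ∣ a ^ p ^ k - b ^ p ^ k := by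
  induction k with
  | zero => simpa using h
  | succ k ih =>
    rw [pow_succ p k, pow_mul, pow_mul, ← geom_sum₂_mul, pow_succ']
    refine mul_dvd_mul ?_ ih
    let f : R →+* R ⧸ Ideal.span {π} := Ideal.Quotient.mk _
    have hf : ∀ r : R, π ∣ r ↔ f r = 0 := fun r ↦ by
      rw [Ideal.Quotient.eq_zero_iff_mem, Ideal.mem_span_singleton]
    rw [hf, map_sub, sub_eq_zero] at h
    rw [hf] at hp
    rw [hf, RingHom.map_geom_sum₂, map_pow, map_pow, h, geom_sum₂_self, ← map_natCast f, hp,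
      zero_mul]

theorem not_pow_dvd_sum_pow_mul {R : Type*} [CommRing R] [IsDomain R] {π : R} (hπ : π ≠ 0)
    {c : ℕ → R} {n a₀ : ℕ} (ha₀ : a₀ < n) (hlt : ∀ a < a₀, π ^ n ∣ c a) (hc : ¬ π ∣ c a₀) :
    ¬ π ^ n ∣ ∑ a ∈ Finset.range n, π ^ a * c a := by
  have hrest : π ^ (a₀ + 1) ∣ ∑ a ∈ (Finset.range n).erase a₀, π ^ a * c a := by
    refine Finset.dvd_sum fun a ha ↦ ?_
    rcases lt_or_gt_of_ne (Finset.ne_of_mem_erase ha) with h | h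
    · exact dvd_mul_of_dvd_right ((pow_dvd_pow π ha₀).trans (hlt a h)) _
    · exact dvd_mul_of_dvd_left (pow_dvd_pow π h) _
  intro hsum
  rw [← Finset.add_sum_erase _ _ (Finset.mem_range.mpr ha₀)] at hsum
  have hlead := (dvd_add_left hrest).mp ((pow_dvd_pow π ha₀).trans hsum)
  rw [pow_succ] at hlead
  exact hc ((mul_dvd_mul_iff_left (pow_ne_zero a₀ hπ)).mp hlead)

theorem WithTop.nonempty_iff_and_isLeast_iff_coe_eq {α : Type*} [LinearOrder α] {s : Set α}
    {I : WithTop α} (hlt : ∀ j : α, (j : WithTop α) < I → j ∉ s)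
    (heq : ∀ j : α, (j : WithTop α) = I → j ∈ s) :
    (s.Nonempty ↔ I ≠ ⊤) ∧ ∀ j, IsLeast s j ↔ (j : WithTop α) = I := by
  induction I with
  | top =>
    have hs : ∀ j, j ∉ s := fun j ↦ hlt j (WithTop.coe_lt_top j)
    exact ⟨by simpa [Set.Nonempty] using hs, fun j ↦ by simpa using fun h ↦ hs j h.1⟩
  | coe i =>
    have hleast : IsLeast s i :=
      ⟨heq i rfl, fun j hj ↦ not_lt.mp fun h ↦ hlt j (WithTop.coe_lt_coe.mpr h) hj⟩
    exact ⟨by simpa using ⟨i, hleast.1⟩, fun j ↦ ⟨fun h ↦ by rw [h.unique hleast],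
      fun h ↦ WithTop.coe_injective h ▸ hleast⟩⟩

theorem HahnSeries.orderTop_pow {Γ R : Type*} [AddCommMonoid Γ] [LinearOrder Γ]
    [IsOrderedCancelAddMonoid Γ] [Semiring R] [Nontrivial R] [NoZeroDivisors R]
    (x : HahnSeries Γ R) (n : ℕ) :
    (x ^ n).orderTop = n • x.orderTop := by
  induction n with
  | zero => simp
  | succ n ih => rw [pow_succ, HahnSeries.orderTop_mul, ih, succ_nsmul]

theorem exists_lt_mul_of_coe_lt_nsmul {M : ℕ} (hM : 0 < M) {j : ℚ} {β : WithTop ℚ}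
    (h : (j : WithTop ℚ) < M • β) : ∃ α : ℚ, j < M * α ∧ (α : WithTop ℚ) ≤ β := by
  induction β with
  | top =>
    refine ⟨|j| + 1, ?_, le_top⟩
    calc j < |j| + 1 := by linarith [le_abs_self j]
      _ ≤ M * (|j| + 1) := le_mul_of_one_le_left (by positivity) (by exact_mod_cast hM)
  | coe b => exact ⟨b, by exact_mod_cast h, le_rfl⟩

namespace ImmSetting

variable {p : ℕ} [Fact p.Prime] (S : ImmSetting p)

def coeffAddHom (i : ℚ) : S.Γimm →+ S.O :=
  AddMonoidHom.mk' (S.coeff · i) (S.coeff_add · · i)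

lemma coeff_sub (x y : S.Γimm) (i : ℚ) : S.coeff (x - y) i = S.coeff x i - S.coeff y i :=
  (S.coeffAddHom i).map_sub x y

lemma coeff_sum {α : Type*} (s : Finset α) (f : α → S.Γimm) (i : ℚ) :
    S.coeff (∑ a ∈ s, f a) i = ∑ a ∈ s, S.coeff (f a) i :=
  map_sum (S.coeffAddHom i) f s

lemma eq_zero_of_forall_abv_lt {c : S.O} (h : ∀ ε : ℝ, 0 < ε → S.abv c < ε) : c = 0 := by
  by_contra hc
  have hpos : 0 < S.abv c :=
    (S.abv_nonneg c).lt_of_ne fun h0 ↦ hc ((S.abv_eq_zero c).mp h0.symm)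
  exact lt_irrefl _ (h _ hpos)

lemma coeff_const_mul (a : S.O) (y : S.Γimm) (i : ℚ) :
    S.coeff (S.const a * y) i = a * S.coeff y i := by
  refine sub_eq_zero.mp (S.eq_zero_of_forall_abv_lt fun ε hε ↦ ?_)
  obtain ⟨T₀, hT⟩ := S.coeff_mul (S.const a) y i ε hε
  have hsum :
      ∑ j ∈ insert 0 T₀, S.coeff (S.const a) j * S.coeff y (i - j) = a * S.coeff y i := by
    rw [Finset.sum_eq_single_of_mem 0 (Finset.mem_insert_self _ _)]
    · rw [S.coeff_const, if_pos rfl, sub_zero]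
    · intro b _ hb
      rw [S.coeff_const, if_neg hb, zero_mul]
  simpa only [hsum] using hT (insert 0 T₀) (Finset.subset_insert _ _)

lemma dvd_coeff_of_const_dvd {c : S.O} {y : S.Γimm} (h : S.const c ∣ y) (i : ℚ) :
    c ∣ S.coeff y i := by
  obtain ⟨w, rfl⟩ := h
  rw [S.coeff_const_mul]
  exact dvd_mul_right c _

lemma coeff_mul_eq_zero_of_lt {a b : S.Γimm} {α β : ℚ} (ha : ∀ i < α, S.coeff a i = 0)
    (hb : ∀ i < β, S.coeff b i = 0) {j : ℚ} (hj : j < α + β) : S.coeff (a * b) j = 0 := by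
  refine S.eq_zero_of_forall_abv_lt fun ε hε ↦ ?_
  obtain ⟨T₀, hT⟩ := S.coeff_mul a b j ε hε
  have hsum : ∑ i ∈ T₀, S.coeff a i * S.coeff b (j - i) = 0 := by
    refine Finset.sum_eq_zero fun i _ ↦ ?_
    by_cases hi : i < α
    · rw [ha i hi, zero_mul]
    · rw [hb (j - i) (by linarith [not_lt.mp hi]), mul_zero]
  simpa only [hsum, sub_zero] using hT T₀ subset_rfl

lemma coeff_pow_eq_zero_of_lt {a : S.Γimm} {α : ℚ} (ha : ∀ i < α, S.coeff a i = 0) (M : ℕ)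
    {j : ℚ} (hj : j < M * α) : S.coeff (a ^ M) j = 0 := by
  induction M generalizing j with
  | zero =>
    rw [pow_zero, S.coeff_one, if_neg]
    rintro rfl
    simp at hj
  | succ M ih =>
    rw [pow_succ]
    refine S.coeff_mul_eq_zero_of_lt (fun i hi ↦ ih hi) ha (β := α) ?_
    push_cast at hj
    linarith

def redFun (y : S.Γimm) : HahnSeries ℚ S.k where
  coeff i := S.redO (S.coeff y i)
  isPWO_support' := by
    refine Set.IsWF.isPWO ((S.coeff_support y 1 one_pos).mono fun i hi ↦ ?_)
    have hp : (1 : ℝ) ≤ p := by exact_mod_cast (Fact.out : p.Prime).one_lt.le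
    calc (p : ℝ) ^ (-1 : ℝ) ≤ 1 := by rw [Real.rpow_neg_one]; exact inv_le_one_of_one_le₀ hp
      _ ≤ S.abv (S.coeff y i) := not_lt.mp fun h ↦ hi ((S.redO_ker _).mpr h)

@[simp] lemma redFun_coeff (y : S.Γimm) (i : ℚ) : (S.redFun y).coeff i = S.redO (S.coeff y i) :=
  rfl

lemma redFun_mul (x y : S.Γimm) : S.redFun (x * y) = S.redFun x * S.redFun y := by
  ext n
  set A := S.redFun x
  set B := S.redFun y
  set D := Finset.antidiagonal A.isPWO_support B.isPWO_support n
  -- `redO` kills everything of absolute value `< 1`, so the approximation of the coefficient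
  -- by a finite sum with `ε = 1` becomes exact after reduction.
  obtain ⟨T₀, hT⟩ := S.coeff_mul x y n 1 one_pos
  have hred := (S.redO_ker _).mpr (hT (T₀ ∪ D.image Prod.fst) Finset.subset_union_left)
  rw [map_sub, sub_eq_zero, map_sum] at hred
  rw [HahnSeries.coeff_mul, redFun_coeff, hred]
  refine Finset.sum_bij_ne_zero (fun i _ _ ↦ (i, n - i)) ?_ ?_ ?_ ?_
  · intro i _ hne
    rw [map_mul] at hne
    exact Finset.mem_antidiagonal.mpr
      ⟨left_ne_zero_of_mul hne, right_ne_zero_of_mul hne, by ring⟩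
  · intro i _ _ j _ _ h
    exact (Prod.ext_iff.mp h).1
  · intro ij hij hne
    obtain ⟨-, -, hsum⟩ := Finset.mem_antidiagonal.mp hij
    have h2 : n - ij.1 = ij.2 := by rw [← hsum]; ring
    refine ⟨ij.1, Finset.mem_union_right _ (Finset.mem_image_of_mem _ hij), ?_, ?_⟩
    · rwa [map_mul, h2]
    · rw [h2]
  · intro i _ _
    rw [map_mul]
    rfl

noncomputable def red : S.Γimm →+* HahnSeries ℚ S.k :=
  RingHom.mk' ⟨⟨S.redFun, by ext i; simp [S.coeff_one, HahnSeries.coeff_one, apply_ite]⟩,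
    S.redFun_mul⟩ fun x y ↦ by ext i; simp [S.coeff_add]

@[simp] lemma red_coeff (y : S.Γimm) (i : ℚ) : (S.red y).coeff i = S.redO (S.coeff y i) := rfl

lemma red_τ (d : HahnSeries ℚ S.k) : S.red (S.τ d) = d := by
  ext i
  rw [red_coeff, S.τ_red]

variable {S} {π : S.O}

lemma dvd_iff_redO_eq_zero (hπ : Irreducible π) (c : S.O) : π ∣ c ↔ S.redO c = 0 := by
  have hker : RingHom.ker S.redO = Ideal.span {π} := by
    rw [← hπ.maximalIdeal_eq]
    exact IsLocalRing.eq_maximalIdeal (RingHom.ker_isMaximal_of_surjective _ S.redO_surjective)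
  rw [← Ideal.mem_span_singleton, ← hker, RingHom.mem_ker]

lemma dvd_natCast_p (hπ : Irreducible π) : π ∣ (p : S.O) := by
  rw [dvd_iff_redO_eq_zero hπ, map_natCast, CharP.cast_eq_zero]

lemma inv_p_le_abv (hπ : Irreducible π) : (p : ℝ)⁻¹ ≤ S.abv π := by
  obtain ⟨c, hc⟩ := dvd_natCast_p hπ
  calc (p : ℝ)⁻¹ = S.abv π * S.abv c := by rw [← S.abv_p, hc, S.abv_mul]
    _ ≤ S.abv π := mul_le_of_le_one_right (S.abv_nonneg π) (S.abv_le_one c)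

lemma const_dvd_iff (hπ : Irreducible π) (y : S.Γimm) :
    S.const π ∣ y ↔ ∀ i, π ∣ S.coeff y i := by
  refine ⟨fun h ↦ S.dvd_coeff_of_const_dvd h, fun h ↦ ?_⟩
  choose f hf using h
  have hp : (0 : ℝ) < p := Nat.cast_pos.mpr (Fact.out : p.Prime).pos
  have hsupp : ∀ ε : ℝ, 0 < ε → {i : ℚ | (p : ℝ) ^ (-ε) ≤ S.abv (f i)}.IsWF := by
    intro ε hε
    refine (S.coeff_support y (ε + 1) (by positivity)).mono fun i hi ↦ ?_
    calc (p : ℝ) ^ (-(ε + 1)) = (p : ℝ)⁻¹ * (p : ℝ) ^ (-ε) := by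
          rw [neg_add, Real.rpow_add hp, Real.rpow_neg_one, mul_comm]
      _ ≤ S.abv π * S.abv (f i) :=
          mul_le_mul (inv_p_le_abv hπ) hi (by positivity) (S.abv_nonneg π)
      _ = S.abv (S.coeff y i) := by rw [hf i, S.abv_mul]
  obtain ⟨w, hw⟩ := S.coeff_surjective f hsupp
  exact ⟨w, S.coeff_injective (funext fun i ↦ by rw [S.coeff_const_mul, hw, hf])⟩

lemma exists_const_dvd_sub_of_dvd_coeff {y : S.Γimm} {α : ℚ} (hπ : Irreducible π)
    (h : ∀ i < α, π ∣ S.coeff y i) :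
    ∃ y₀ : S.Γimm, (∀ i < α, S.coeff y₀ i = 0) ∧ S.const π ∣ y - y₀ := by
  have hsupp : ∀ ε : ℝ, 0 < ε →
      {i : ℚ | (p : ℝ) ^ (-ε) ≤ S.abv (if i < α then 0 else S.coeff y i)}.IsWF := by
    intro ε hε
    refine (S.coeff_support y ε hε).mono fun i hi ↦ ?_
    simp only [Set.mem_ofPred_eq] at hi ⊢
    split_ifs at hi
    · have hpos : 0 < (p : ℝ) ^ (-ε) := Real.rpow_pos_of_pos (Nat.cast_pos.mpr (Fact.out : p.Prime).pos) _
      rw [(S.abv_eq_zero 0).mpr rfl] at hi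
      exact absurd hi (not_le.mpr hpos)
    · exact hi
  obtain ⟨y₀, hy₀⟩ := S.coeff_surjective _ hsupp
  replace hy₀ := congrFun hy₀
  refine ⟨y₀, fun i hi ↦ by rw [hy₀, if_pos hi], (const_dvd_iff hπ _).mpr fun i ↦ ?_⟩
  rw [S.coeff_sub, hy₀]
  split_ifs with hi
  · simpa using h i hi
  · simp

lemma pow_dvd_coeff_τ_of_lt_orderTop (hπ : Irreducible π) (n : ℕ) {d : HahnSeries ℚ S.k}
    {j : ℚ} (hj : (j : WithTop ℚ) < d.orderTop) : π ^ n ∣ S.coeff (S.τ d) j := by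
  obtain ⟨y, hy⟩ := S.τ_roots d n
  have hred : S.red y ^ p ^ n = d := by rw [← map_pow, hy, S.red_τ]
  rw [← hred, HahnSeries.orderTop_pow] at hj
  obtain ⟨α, hjα, hα⟩ := exists_lt_mul_of_coe_lt_nsmul (pow_pos (Fact.out : p.Prime).pos n) hj
  obtain ⟨y₀, hy₀, hyy₀⟩ := exists_const_dvd_sub_of_dvd_coeff hπ (y := y) (α := α) fun i hi ↦ by
    rw [dvd_iff_redO_eq_zero hπ, ← S.red_coeff]
    exact HahnSeries.coeff_eq_zero_of_lt_orderTop ((WithTop.coe_lt_coe.mpr hi).trans_le hα)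
  have hp : S.const π ∣ (p : S.Γimm) := by simpa using map_dvd S.const (dvd_natCast_p hπ)
  have hpow := dvd_sub_pow_of_dvd_sub_of_dvd_natCast hp hyy₀ n
  rw [← map_pow, hy] at hpow
  have hcoeff := S.dvd_coeff_of_const_dvd hpow j
  rw [S.coeff_sub, S.coeff_pow_eq_zero_of_lt hy₀ _ (by exact_mod_cast hjα), sub_zero] at hcoeff
  exact (pow_dvd_pow π n.le_succ).trans hcoeff

lemma not_dvd_coeff_τ_of_orderTop_eq (hπ : Irreducible π) {d : HahnSeries ℚ S.k} {j : ℚ}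
    (hj : d.orderTop = j) : ¬ π ∣ S.coeff (S.τ d) j := by
  rw [dvd_iff_redO_eq_zero hπ, S.τ_red]
  exact HahnSeries.coeff_orderTop_ne hj

end ImmSetting

/-- Let `τ : K^imm → Γ^imm` be the Teichmüller map and `ν` the
valuation on `K^imm` (normalized so that a uniformizer of `K` has valuation 1).  If
`x = ∑_{a=0}^∞ π^a τ(d_a)` with `d_a ∈ K^imm`, then for every `n ≥ 1` the smallest
rational `j` such that the coefficient `c_j` of `u^j` in `x` is `≢ 0 mod π^n` equals
`min {ν(d_0), …, ν(d_{n-1})}`. -/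
theorem teichmuller_expansion_order {p : ℕ} [Fact p.Prime] (S : ImmSetting p)
    (π : S.O) (hπ : Irreducible π)
    (x : S.Γimm) (d : ℕ → HahnSeries ℚ S.k)
    (hx : ∀ n : ℕ, ∃ z : S.Γimm,
      x - ∑ a ∈ Finset.range n, S.const (π ^ a) * S.τ (d a) = S.const (π ^ n) * z) :
    ∀ n : ℕ, 1 ≤ n →
      ({j : ℚ | ¬ (π ^ n ∣ S.coeff x j)}.Nonempty ↔
        (Finset.range n).inf (fun a => (d a).orderTop) ≠ ⊤) ∧
      ∀ j : ℚ, IsLeast {j : ℚ | ¬ (π ^ n ∣ S.coeff x j)} j ↔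
        ((j : WithTop ℚ) = (Finset.range n).inf (fun a => (d a).orderTop)) := by
  intro n hn
  set I := (Finset.range n).inf fun a ↦ (d a).orderTop
  have hcoeff (j : ℚ) :
      π ^ n ∣ S.coeff x j ↔ π ^ n ∣ ∑ a ∈ Finset.range n, π ^ a * S.coeff (S.τ (d a)) j := by
    obtain ⟨z, hz⟩ := hx n
    refine dvd_iff_dvd_of_dvd_sub ?_
    simpa only [S.coeff_sub, S.coeff_sum, S.coeff_const_mul] using
      S.dvd_coeff_of_const_dvd ⟨z, hz⟩ j
  refine WithTop.nonempty_iff_and_isLeast_iff_coe_eq (fun j hj ↦ ?_) (fun j hj ↦ ?_)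
  · rw [Set.mem_ofPred_eq, not_not, hcoeff]
    exact Finset.dvd_sum fun a ha ↦ dvd_mul_of_dvd_right
      (ImmSetting.pow_dvd_coeff_τ_of_lt_orderTop hπ n (hj.trans_le (Finset.inf_le ha))) _
  · have hex : ∃ a, a < n ∧ (d a).orderTop = I := by
      obtain ⟨a, ha, h⟩ := Finset.exists_mem_eq_inf (Finset.range n)
        (Finset.nonempty_range_iff.mpr (by omega)) fun a ↦ (d a).orderTop
      exact ⟨a, Finset.mem_range.mp ha, h.symm⟩
    obtain ⟨ha₀n, ha₀⟩ := Nat.find_spec hex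
    rw [Set.mem_ofPred_eq, hcoeff]
    refine not_pow_dvd_sum_pow_mul hπ.ne_zero ha₀n (fun a ha ↦ ?_)
      (ImmSetting.not_dvd_coeff_τ_of_orderTop_eq hπ (ha₀.trans hj.symm))
    have hle : I ≤ (d a).orderTop := Finset.inf_le (Finset.mem_range.mpr (ha.trans ha₀n))
    exact ImmSetting.pow_dvd_coeff_τ_of_lt_orderTop hπ n
      (hj ▸ hle.lt_of_ne fun h ↦ Nat.find_min hex ha ⟨ha.trans ha₀n, h.symm⟩)
end
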